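/- arXiv:0805.0468 — 7 statements merged into one kernel-verified Lean document; each statement's English description precedes it below -/
import Mathlib

section
/- Every (2p+1)-dimensional complex Lie algebra carrying a contact form contracts onto the Heisenberg algebra h_{2p+1}: let μ be a Lie bracket on ℂ^{2p+1} and suppose there is a basis (X₁, X₂, …, X_{2p+1}) such that, writing μ(X_i, X_j) = Σ_k C_{ij}^k X_k, one has C_{2,3}^1 = C_{4,5}^1 = ⋯ = C_{2p,2p+1}^1 = 1 and C_{ij}^1 = 0 for all other pairs i < j (the normal form of a contact form). Define f_ε ∈ GL(ℂ^{2p+1}) by f_ε(X₁) = ε²X₁ and f_ε(X_i) = εX_i for i ≥ 2. Then as ε → 0 the brackets (f_ε * μ)(X,Y) = f_ε⁻¹(μ(f_ε(X), f_ε(Y))) converge, in the space of bilinear maps, to the bracket μ₀ determined by μ₀(X_{2i}, X_{2i+1}) = X₁ for i = 1,…,p and μ₀(X_i, X_j) = 0 for all other pairs of basis vectors, which is (isomorphic to) the Heisenberg Lie bracket of dimension 2p+1. -/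
/-!
Only the first coordinate of `μ` survives in the limit, and that is what the contact normal form
pins down: the forms `(X, Y) ↦ μ(X, Y)₀` and `(X, Y) ↦ μ₀(X, Y)₀` are alternating bilinear
forms that agree on the basis pairs `(e_i, e_j)`, `i < j`, hence they are equal. As `μ₀` does
not read the first coordinate of its arguments, the first coordinate of `f_ε * μ` is
`ε⁻² μ₀(f_ε X, f_ε Y)₀ = μ₀(X, Y)₀` for every `ε ≠ 0`. Writing `f_ε X = ε • X_ε`, where `X_ε`
is `X` with first coordinate multiplied by `ε`, every other coordinate of `f_ε * μ` is
`ε μ(X_ε, Y_ε)_k`, which is continuous in `ε` and vanishes at `ε = 0`.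
-/

open Filter Topology

/-- The standard basis vector `e i` of `ℂ^m`. -/
noncomputable def stdBasisVec (m : ℕ) (i : Fin m) : Fin m → ℂ := Pi.single i 1

/-- The contraction isomorphism `f_ε`: `f_ε(X₁) = ε² X₁`, `f_ε(X_i) = ε X_i` for `i ≥ 2`
(indices written 0-based, so `X₁` is coordinate `0`). -/
noncomputable def contactScale (p : ℕ) (ε : ℂ) (x : Fin (2 * p + 1) → ℂ) :
    Fin (2 * p + 1) → ℂ :=
  fun j => if j = 0 then ε ^ 2 * x j else ε * x j

/-- The inverse `f_ε⁻¹` of the contraction isomorphism. -/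
noncomputable def contactScaleInv (p : ℕ) (ε : ℂ) (x : Fin (2 * p + 1) → ℂ) :
    Fin (2 * p + 1) → ℂ :=
  fun j => if j = 0 then (ε ^ 2)⁻¹ * x j else ε⁻¹ * x j

/-- The Heisenberg Lie bracket `μ₀` on `ℂ^{2p+1}`, determined (by bilinearity) by
`μ₀(X_{2i}, X_{2i+1}) = X₁` for `i = 1,…,p` and `μ₀(X_i, X_j) = 0` for all other pairs of
basis vectors (0-based: `μ₀(e_{2i+1}, e_{2i+2}) = e₀`). -/
noncomputable def heisenbergBracket (p : ℕ) (X Y : Fin (2 * p + 1) → ℂ) :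
    Fin (2 * p + 1) → ℂ :=
  fun k => if k = 0 then
    ∑ i : Fin p,
      (X ⟨2 * i.1 + 1, by have := i.2; omega⟩ * Y ⟨2 * i.1 + 2, by have := i.2; omega⟩ -
       X ⟨2 * i.1 + 2, by have := i.2; omega⟩ * Y ⟨2 * i.1 + 1, by have := i.2; omega⟩)
  else 0

theorem LinearMap.IsAlt.ext_basis_of_lt {R M N ι : Type*} [CommRing R] [AddCommGroup M]
    [Module R M] [AddCommGroup N] [Module R N] [LinearOrder ι] {B B' : M →ₗ[R] M →ₗ[R] N}
    (hB : B.IsAlt) (hB' : B'.IsAlt) (b : Module.Basis ι R M)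
    (h : ∀ i j, i < j → B (b i) (b j) = B' (b i) (b j)) : B = B' :=
  LinearMap.ext_basis b b fun i j => by
    rcases lt_trichotomy i j with hij | rfl | hij
    · exact h i j hij
    · rw [hB, hB']
    · rw [← hB.neg, ← hB'.neg, h j i hij]

section Contraction

variable {p : ℕ} {μ : (Fin (2 * p + 1) → ℂ) → (Fin (2 * p + 1) → ℂ) → (Fin (2 * p + 1) → ℂ)}

theorem heisenbergBracket_apply_of_ne_zero (X Y : Fin (2 * p + 1) → ℂ) {k : Fin (2 * p + 1)}
    (hk : k ≠ 0) : heisenbergBracket p X Y k = 0 := if_neg hk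

theorem isBilinearMap_heisenbergBracket : IsBilinearMap ℂ (heisenbergBracket p) := by
  constructor <;> intros <;> ext k <;>
    simp only [heisenbergBracket, Pi.add_apply, Pi.smul_apply, smul_eq_mul] <;>
    split_ifs <;>
    simp only [Finset.mul_sum, ← Finset.sum_add_distrib, mul_zero, add_zero] <;>
    exact Finset.sum_congr rfl fun _ _ => by ring

theorem heisenbergBracket_self (X : Fin (2 * p + 1) → ℂ) : heisenbergBracket p X X = 0 := by
  ext k
  by_cases hk : k = 0 <;> simp [heisenbergBracket, hk, mul_comm]

theorem heisenbergBracket_stdBasisVec_apply_zero {i j : Fin (2 * p + 1)} (hij : i < j) :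
    heisenbergBracket p (stdBasisVec _ i) (stdBasisVec _ j) 0 =
      if i.1 % 2 = 1 ∧ j.1 = i.1 + 1 then 1 else 0 := by
  have hlt : i.1 < j.1 := hij
  have hj := j.2
  simp only [heisenbergBracket, if_pos, stdBasisVec, Pi.single_apply, Fin.ext_iff, mul_ite,
    mul_one, mul_zero, Finset.sum_sub_distrib]
  have hswapped : (∑ t : Fin p,
      if 2 * t.1 + 1 = j.1 then if 2 * t.1 + 2 = i.1 then (1 : ℂ) else 0 else 0) = 0 :=
    Finset.sum_eq_zero fun t _ => by split_ifs <;> first | rfl | omega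
  rw [hswapped, sub_zero]
  split_ifs with hpair
  · rw [Finset.sum_eq_single (⟨i.1 / 2, by omega⟩ : Fin p)
      (fun t _ ht => by split_ifs <;> first | rfl | exact absurd (Fin.ext (by simp; omega)) ht)
      (by simp)]
    dsimp only
    split_ifs <;> first | rfl | omega
  · exact Finset.sum_eq_zero fun t _ => by split_ifs <;> first | rfl | omega

theorem heisenbergBracket_stdBasisVec_pair (t : Fin p) :
    heisenbergBracket p (stdBasisVec (2 * p + 1) ⟨2 * t.1 + 1, by have := t.2; omega⟩)
      (stdBasisVec (2 * p + 1) ⟨2 * t.1 + 2, by have := t.2; omega⟩) =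
    stdBasisVec (2 * p + 1) 0 := by
  ext k
  by_cases hk : k = 0
  · subst hk
    rw [heisenbergBracket_stdBasisVec_apply_zero (by simp [Fin.lt_def])]
    simp [stdBasisVec]
  · simp [heisenbergBracket_apply_of_ne_zero _ _ hk, stdBasisVec, hk]

theorem heisenbergBracket_contactScale_apply_zero (ε : ℂ) (X Y : Fin (2 * p + 1) → ℂ) :
    heisenbergBracket p (contactScale p ε X) (contactScale p ε Y) 0 =
      ε ^ 2 * heisenbergBracket p X Y 0 := by
  simp only [heisenbergBracket, contactScale, if_pos, Fin.ext_iff, Fin.val_zero,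
    Nat.add_one_ne_zero, if_false, Finset.mul_sum]
  exact Finset.sum_congr rfl fun _ _ => by ring

theorem apply_zero_eq_heisenbergBracket_of_contact (hμ : IsBilinearMap ℂ μ)
    (hskew : ∀ X Y, μ X Y = - μ Y X)
    (hcontact : ∀ i j : Fin (2 * p + 1), i < j →
      μ (stdBasisVec (2 * p + 1) i) (stdBasisVec (2 * p + 1) j) 0 =
        if i.1 % 2 = 1 ∧ j.1 = i.1 + 1 then 1 else 0)
    (X Y : Fin (2 * p + 1) → ℂ) : μ X Y 0 = heisenbergBracket p X Y 0 := by
  let B := hμ.toLinearMap.compr₂ (LinearMap.proj 0)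
  let B₀ := (isBilinearMap_heisenbergBracket (p := p)).toLinearMap.compr₂ (LinearMap.proj 0)
  have hB : B.IsAlt := fun X => CharZero.eq_neg_self_iff.mp (congrFun (hskew X X) 0)
  have hB₀ : B₀.IsAlt := fun X => congrFun (heisenbergBracket_self X) 0
  have hBB₀ : B = B₀ := hB.ext_basis_of_lt hB₀ (Pi.basisFun ℂ _) fun i j hij => by
    simpa [B, B₀, stdBasisVec, IsBilinearMap.toLinearMap] using
      (hcontact i j hij).trans (heisenbergBracket_stdBasisVec_apply_zero hij).symm
  exact LinearMap.congr_fun₂ hBB₀ X Y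

theorem contactScaleInv_contactScale {ε : ℂ} (hε : ε ≠ 0) (x : Fin (2 * p + 1) → ℂ) :
    contactScaleInv p ε (contactScale p ε x) = x := by
  ext j
  simp only [contactScale, contactScaleInv]
  split_ifs <;> field_simp

theorem contactScale_eq_smul_update (ε : ℂ) (X : Fin (2 * p + 1) → ℂ) :
    contactScale p ε X = ε • Function.update X 0 (ε * X 0) := by
  ext j
  by_cases hj : j = 0
  · subst hj
    simp [contactScale, pow_two, mul_assoc]
  · simp [contactScale, hj]

theorem contactScale_conj_apply_zero (h₀ : ∀ X Y, μ X Y 0 = heisenbergBracket p X Y 0)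
    {ε : ℂ} (hε : ε ≠ 0) (X Y : Fin (2 * p + 1) → ℂ) :
    contactScaleInv p ε (μ (contactScale p ε X) (contactScale p ε Y)) 0 =
      heisenbergBracket p X Y 0 := by
  rw [contactScaleInv, if_pos rfl, h₀, heisenbergBracket_contactScale_apply_zero]
  field_simp

theorem contactScale_conj_apply_of_ne_zero (hμ : IsBilinearMap ℂ μ) {ε : ℂ} (hε : ε ≠ 0)
    (X Y : Fin (2 * p + 1) → ℂ) {k : Fin (2 * p + 1)} (hk : k ≠ 0) :
    contactScaleInv p ε (μ (contactScale p ε X) (contactScale p ε Y)) k =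
      ε * μ (Function.update X 0 (ε * X 0)) (Function.update Y 0 (ε * Y 0)) k := by
  rw [contactScale_eq_smul_update, contactScale_eq_smul_update, hμ.smul_left, hμ.smul_right,
    smul_smul, contactScaleInv, if_neg hk, Pi.smul_apply, smul_eq_mul]
  field_simp

theorem tendsto_contactScale_conj (hμ : IsBilinearMap ℂ μ)
    (h₀ : ∀ X Y, μ X Y 0 = heisenbergBracket p X Y 0) :
    Tendsto
      (fun ε : ℂ => fun X Y => contactScaleInv p ε (μ (contactScale p ε X) (contactScale p ε Y)))
      (𝓝[≠] (0 : ℂ)) (𝓝 (heisenbergBracket p)) := by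
  simp only [tendsto_pi_nhds]
  intro X Y k
  by_cases hk : k = 0
  · subst hk
    exact tendsto_const_nhds.congr' <| eventually_nhdsWithin_of_forall fun ε hε =>
      (contactScale_conj_apply_zero h₀ hε X Y).symm
  · have hupdate (Z : Fin (2 * p + 1) → ℂ) :
        Continuous fun ε : ℂ => Function.update Z 0 (ε * Z 0) :=
      continuous_const.update 0 (continuous_id.mul continuous_const)
    have hcont : Continuous fun ε : ℂ =>
        ε * μ (Function.update X 0 (ε * X 0)) (Function.update Y 0 (ε * Y 0)) k :=
      continuous_id.mul <| continuous_apply k |>.comp <|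
        (hμ.toContinuousBilinearMap.continuous.comp (hupdate X)).clm_apply (hupdate Y)
    have hlim := (hcont.tendsto 0).mono_left (nhdsWithin_le_nhds (s := {0}ᶜ))
    rw [zero_mul] at hlim
    rw [heisenbergBracket_apply_of_ne_zero X Y hk]
    exact hlim.congr' <| eventually_nhdsWithin_of_forall fun ε hε =>
      (contactScale_conj_apply_of_ne_zero hμ hε X Y hk).symm

end Contraction

/-- **Every Lie algebra with a contact form contracts onto the Heisenberg algebra.**
Let `μ` be a Lie bracket on `ℂ^{2p+1}` whose structure constants on the first coordinate are
those of the normal form of a contact form: `C_{2k+1,2k+2}¹ = 1` (0-based: the pairs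
`(e_i, e_{i+1})` with `i` odd) and `C_{ij}¹ = 0` otherwise for `i < j`.  Then `f_ε⁻¹` inverts
`f_ε` for `ε ≠ 0`, and as `ε → 0` the transported brackets `f_ε * μ` converge, in the space of
bilinear maps, to the Heisenberg bracket `μ₀` of dimension `2p+1`, which indeed sends the `p`
distinguished pairs of basis vectors to the first basis vector. -/
theorem contact_lie_algebra_contracts_to_heisenberg
    (p : ℕ) (μ : (Fin (2 * p + 1) → ℂ) → (Fin (2 * p + 1) → ℂ) → (Fin (2 * p + 1) → ℂ))
    (hadd₁ : ∀ X X' Y, μ (X + X') Y = μ X Y + μ X' Y)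
    (hsmul₁ : ∀ (c : ℂ) X Y, μ (c • X) Y = c • μ X Y)
    (hadd₂ : ∀ X Y Y', μ X (Y + Y') = μ X Y + μ X Y')
    (hsmul₂ : ∀ (c : ℂ) X Y, μ X (c • Y) = c • μ X Y)
    (hskew : ∀ X Y, μ X Y = - μ Y X)
    (hcontact : ∀ i j : Fin (2 * p + 1), i < j →
      μ (stdBasisVec (2 * p + 1) i) (stdBasisVec (2 * p + 1) j) 0 =
        if i.1 % 2 = 1 ∧ j.1 = i.1 + 1 then 1 else 0) :
    (∀ ε : ℂ, ε ≠ 0 → ∀ x, contactScaleInv p ε (contactScale p ε x) = x) ∧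
    (∀ i : Fin p,
      heisenbergBracket p (stdBasisVec (2 * p + 1) ⟨2 * i.1 + 1, by have := i.2; omega⟩)
        (stdBasisVec (2 * p + 1) ⟨2 * i.1 + 2, by have := i.2; omega⟩) =
      stdBasisVec (2 * p + 1) 0) ∧
    Tendsto
      (fun ε : ℂ => fun X Y => contactScaleInv p ε (μ (contactScale p ε X) (contactScale p ε Y)))
      (𝓝[≠] (0 : ℂ)) (𝓝 (heisenbergBracket p)) := by
  have hμ : IsBilinearMap ℂ μ := ⟨hadd₁, hsmul₁, hadd₂, hsmul₂⟩
  exact ⟨fun _ hε => contactScaleInv_contactScale hε, heisenbergBracket_stdBasisVec_pair,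
    tendsto_contactScale_conj hμ (apply_zero_eq_heisenbergBracket_of_contact hμ hskew hcontact)⟩
end

section
/- Canonical decomposition in mᵏ: let K be a field and A a deformation ring over K with maximal ideal m. For every vector (a₁, a₂, …, a_k) ∈ mᵏ there exist an integer h with h ≤ k, linearly independent vectors V₁, V₂, …, V_h in Kᵏ, and elements b₁, b₂, …, b_h ∈ m such that, viewing each V_i inside Aᵏ via the structure map K → A applied componentwise, (a₁, a₂, …, a_k) = b₁V₁ + b₁b₂V₂ + ⋯ + b₁b₂⋯b_hV_h. -/
/-!
Pick a coordinate `a j₀` dividing all the others (divisibility is total in a valuation ring) and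
write `a = a j₀ • (c + d)` with `c ∈ Kᵏ`, `c j₀ = 1` and `d ∈ mᵏ` (the residue field is `K`).
Then `b₁ = a j₀`, `V₁ = c`, and the remaining terms come from the decomposition of `d` restricted
to the other `k - 1` coordinates, extended by `0` at `j₀`; as these vectors vanish at `j₀` while
`c` does not, linear independence is preserved.
-/

open Finset IsLocalRing

theorem Fin.prod_Iic_succ {M : Type*} [CommMonoid M] {n : ℕ} (b : Fin (n + 1) → M) (i : Fin n) :
    ∏ l ∈ Iic i.succ, b l = b 0 * ∏ l ∈ Iic i, b l.succ := by
  rw [← bot_eq_zero, ← Icc_bot, ← mul_prod_Ioc_eq_prod_Icc bot_le, bot_eq_zero,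
    ← Fin.map_succEmb_Iic, prod_map]
  rfl

theorem Fin.sum_prod_Iic_mul_succ {R : Type*} [CommSemiring R] {n : ℕ} (b f : Fin (n + 1) → R) :
    ∑ i, (∏ l ∈ Iic i, b l) * f i =
      b 0 * (f 0 + ∑ i : Fin n, (∏ l ∈ Iic i, b l.succ) * f i.succ) := by
  have hIic : Iic (0 : Fin (n + 1)) = {0} := Iic_bot
  simp only [Fin.sum_univ_succ, Fin.prod_Iic_succ, hIic, prod_singleton, mul_add, mul_sum,
    mul_assoc]

theorem linearIndependent_finCons_insertNth_zero {K : Type*} [Field K] {k h : ℕ}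
    {j₀ : Fin (k + 1)} {c : Fin (k + 1) → K} (hc : c j₀ ≠ 0) {V : Fin h → Fin k → K}
    (hV : LinearIndependent K V) :
    LinearIndependent K
      (Fin.cons c fun i ↦ j₀.insertNth 0 (V i) : Fin (h + 1) → Fin (k + 1) → K) := by
  rw [linearIndependent_finCons]
  refine ⟨.of_comp (LinearMap.funLeft K K j₀.succAbove) ?_, fun hspan ↦ hc ?_⟩
  · convert hV
    funext i
    exact Fin.insertNth_comp_succAbove j₀ 0 (V i)
  · have hker : Submodule.span K (Set.range fun i ↦ j₀.insertNth (α := fun _ ↦ K) 0 (V i)) ≤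
        LinearMap.ker (LinearMap.proj j₀) :=
      Submodule.span_le.mpr (Set.range_subset_iff.mpr fun i ↦ by simp)
    simpa using hker hspan

theorem PreValuationRing.exists_dvd_forall {A ι : Type*} [CommRing A] [Nontrivial A]
    [PreValuationRing A] [Finite ι] [Nonempty ι] (a : ι → A) : ∃ j₀, ∀ j, a j₀ ∣ a j := by
  classical
  obtain ⟨j₀, hj₀⟩ := Finite.exists_max fun j ↦ Ideal.span {a j}
  exact ⟨j₀, fun j ↦ Ideal.span_singleton_le_span_singleton.mp (hj₀ j)⟩

section

variable {K A : Type*} [Field K] [CommRing A] [Algebra K A]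

theorem exists_sub_algebraMap_mem_maximalIdeal [IsLocalRing A]
    (hres : Function.Surjective ((residue A).comp (algebraMap K A))) (x : A) :
    ∃ c : K, x - algebraMap K A c ∈ maximalIdeal A := by
  obtain ⟨c, hc⟩ := hres (residue A x)
  exact ⟨c, by rw [← residue_eq_zero_iff, map_sub, sub_eq_zero]; exact hc.symm⟩

theorem exists_eq_mul_algebraMap_add_of_surjective_residue [IsDomain A] [ValuationRing A]
    (hres : Function.Surjective ((residue A).comp (algebraMap K A)))
    {ι : Type*} [Finite ι] [Nonempty ι] (a : ι → A) :
    ∃ (j₀ : ι) (c : ι → K) (d : ι → A), c j₀ = 1 ∧ (∀ j, d j ∈ maximalIdeal A) ∧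
      ∀ j, a j = a j₀ * (algebraMap K A (c j) + d j) := by
  classical
  obtain ⟨j₀, hdvd⟩ := PreValuationRing.exists_dvd_forall a
  choose q hq using hdvd
  choose c hc using fun j ↦ exists_sub_algebraMap_mem_maximalIdeal hres (q j)
  refine ⟨j₀, Function.update c j₀ 1, Function.update (fun j ↦ q j - algebraMap K A (c j)) j₀ 0,
    by simp, fun j ↦ ?_, fun j ↦ ?_⟩ <;> rcases eq_or_ne j j₀ with rfl | hj
  · simp
  · simpa [hj] using hc j
  · simp
  · simpa [hj] using hq j

end

/-- **Canonical decomposition in `mᵏ`.**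
Let `K` be a field and `A` a deformation ring over `K` (a `K`-algebra which is a valuation
domain whose residue field is `K` via the structure map) with maximal ideal `m`.  Every vector
`(a₁, …, a_k) ∈ mᵏ` can be written as
`b₁V₁ + b₁b₂V₂ + ⋯ + b₁b₂⋯b_hV_h` with `h ≤ k`, the `Vᵢ ∈ Kᵏ` linearly independent and the
`bᵢ ∈ m`, where each `Vᵢ` is viewed in `Aᵏ` via the structure map `K → A` componentwise. -/
theorem canonical_decomposition_in_maximal_ideal_power
    (K : Type) [Field K] (A : Type) [CommRing A] [IsDomain A] [ValuationRing A] [Algebra K A]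
    (hres : Function.Bijective ((IsLocalRing.residue A).comp (algebraMap K A)))
    (k : ℕ) (a : Fin k → A) (ha : ∀ j, a j ∈ IsLocalRing.maximalIdeal A) :
    ∃ h : ℕ, h ≤ k ∧
      ∃ (V : Fin h → (Fin k → K)) (b : Fin h → A),
        LinearIndependent K V ∧
        (∀ i, b i ∈ IsLocalRing.maximalIdeal A) ∧
        ∀ j : Fin k, a j = ∑ i : Fin h, (∏ l ∈ Finset.Iic i, b l) * algebraMap K A (V i j) := by
  induction k with
  | zero => exact ⟨0, le_rfl, Fin.elim0, Fin.elim0, linearIndependent_empty_type,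
      fun i ↦ i.elim0, fun j ↦ j.elim0⟩
  | succ k ih =>
    obtain ⟨j₀, c, d, hc, hd, had⟩ :=
      exists_eq_mul_algebraMap_add_of_surjective_residue hres.surjective a
    obtain ⟨h, hk, V, b, hV, hb, hdV⟩ := ih (fun j ↦ d (j₀.succAbove j)) fun j ↦ hd _
    refine ⟨h + 1, by omega, Fin.cons c fun i ↦ j₀.insertNth 0 (V i), Fin.cons (a j₀) b,
      linearIndependent_finCons_insertNth_zero (by simp [hc]) hV, Fin.cases (ha j₀) hb,
      fun j ↦ ?_⟩
    rw [Fin.sum_prod_Iic_mul_succ]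
    rcases j₀.eq_self_or_eq_succAbove j with rfl | ⟨j, rfl⟩
    · simp [hc]
    · simp [had (j₀.succAbove j), hdV]
end

section
/- Uniqueness of the canonical decomposition: let K be a field and A a deformation ring over K with maximal ideal m. Suppose a vector (a₁, …, a_k) ∈ mᵏ admits two decompositions (a₁,…,a_k) = b₁V₁ + b₁b₂V₂ + ⋯ + b₁⋯b_hV_h = c₁W₁ + c₁c₂W₂ + ⋯ + c₁⋯c_sW_s, where b₁,…,b_h and c₁,…,c_s are nonzero elements of m, the vectors V₁,…,V_h ∈ Kᵏ are linearly independent over K, and the vectors W₁,…,W_s ∈ Kᵏ are linearly independent over K (each V_i, W_j viewed in Aᵏ via K → A componentwise). Then h = s, and the two decompositions generate the same flag: for every i ∈ {1,…,h}, the K-linear span of {V₁,…,V_i} equals the K-linear span of {W₁,…,W_i}. -/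
/-!
Pair the vector `a = Σ b₁⋯bₗ Vₗ` with a linear form `φ` on `Kᵏ`. If `φ` kills `V₁, …, V_{i-1}`,
then `φ(a) = b₁⋯bᵢ (φ(Vᵢ) + t)` with `t ∈ m`, because the later partial products are multiples
of `b₁⋯bᵢ` by elements of `m`; so `φ(a)` is `b₁⋯bᵢ` times a unit when `φ(Vᵢ) ≠ 0`, and lies in
`b₁⋯bᵢ m` otherwise.

Suppose the two flags agree up to step `i - 1`. A form vanishing on the common subspace but not
on `Vᵢ` gives `c₁⋯cᵢ ∣ b₁⋯bᵢ`, and symmetrically. A form vanishing on the common subspace and on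
`Wᵢ` but not on `Vᵢ` would then put a unit multiple of `b₁⋯bᵢ` into `b₁⋯bᵢ m`, so `Vᵢ` lies in
`span{W₁, …, Wᵢ}`, and symmetrically. Finally, once the flags agree up to `min h s`, a form
separating the first unmatched vector of the longer family from the common span vanishes at `a`
according to one decomposition but not the other, hence `h = s`.
-/

open IsLocalRing Finset

namespace CanonicalDecomposition

lemma prod_Iic_eq_mul_prod_Ioc {M : Type*} [CommMonoid M] {n : ℕ} (b : Fin n → M) {i l : Fin n}
    (hil : i ≤ l) : ∏ m ∈ Iic l, b m = (∏ m ∈ Iic i, b m) * ∏ m ∈ Ioc i l, b m := by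
  rw [← prod_union (Iic_disjoint_Ioc le_rfl), Iic_union_Ioc_eq_Iic hil]

variable {K A E : Type*} [Field K] [CommRing A] [Algebra K A] [AddCommGroup E] [Module K E]

lemma exists_dual_ne_zero_of_notMem {W : Submodule K E} {v : E} (hv : v ∉ W) :
    ∃ φ : Module.Dual K E, (∀ w ∈ W, φ w = 0) ∧ φ v ≠ 0 := by
  simpa [Submodule.mem_dualAnnihilator] using
    mt (Subspace.forall_mem_dualAnnihilator_apply_eq_zero_iff W v).1 hv

variable (K) in
def partialSpan {n : ℕ} (v : Fin n → E) (i : ℕ) : Submodule K E :=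
  Submodule.span K (v '' {l | (l : ℕ) < i})

lemma apply_mem_partialSpan {n : ℕ} (v : Fin n → E) {i : ℕ} {l : Fin n} (hl : (l : ℕ) < i) :
    v l ∈ partialSpan K v i :=
  Submodule.subset_span ⟨l, hl, rfl⟩

lemma apply_notMem_partialSpan {n : ℕ} {v : Fin n → E} (hv : LinearIndependent K v) {i : ℕ}
    (hi : i < n) : v ⟨i, hi⟩ ∉ partialSpan K v i :=
  hv.notMem_span_image (by simp)

lemma partialSpan_succ {n : ℕ} (v : Fin n → E) {i : ℕ} (hi : i < n) :
    partialSpan K v (i + 1) = partialSpan K v i ⊔ K ∙ v ⟨i, hi⟩ := by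
  have hset : {l : Fin n | (l : ℕ) < i + 1} =
      insert (⟨i, hi⟩ : Fin n) {l : Fin n | (l : ℕ) < i} := by
    ext l
    simp [Fin.ext_iff, Nat.le_iff_lt_or_eq, or_comm]
  rw [partialSpan, partialSpan, hset, Set.image_insert_eq, Submodule.span_insert, sup_comm]

/-- The value at `Σ b₁⋯bₗ vₗ` of the `A`-linear extension of `φ`. -/
def decompEval {n : ℕ} (b : Fin n → A) (v : Fin n → E) (φ : Module.Dual K E) : A :=
  ∑ l, (∏ m ∈ Iic l, b m) * algebraMap K A (φ (v l))

lemma decompEval_eq_sum_coord {n k : ℕ} (b : Fin n → A) (V : Fin n → Fin k → K)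
    (φ : Module.Dual K (Fin k → K)) :
    decompEval b V φ = ∑ j, algebraMap K A (φ (Pi.single j 1)) *
      ∑ l, (∏ m ∈ Iic l, b m) * algebraMap K A (V l j) := by
  simp only [decompEval, LinearMap.pi_apply_eq_sum_univ φ (V _), map_sum, smul_eq_mul, map_mul,
    mul_sum]
  rw [sum_comm]
  refine sum_congr rfl fun j _ => sum_congr rfl fun l _ => ?_
  have hsingle : (fun i => if j = i then (1 : K) else 0) = Pi.single j 1 := by
    ext i; simp [Pi.single_apply, eq_comm]
  rw [hsingle]
  ring

variable [IsLocalRing A]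

lemma isUnit_algebraMap_add {x : K} (hx : x ≠ 0) {t : A} (ht : t ∈ maximalIdeal A) :
    IsUnit (algebraMap K A x + t) := by
  rw [← notMem_maximalIdeal]
  intro hxt
  have hunit : IsUnit (algebraMap K A x) := (isUnit_iff_ne_zero.2 hx).map _
  exact notMem_maximalIdeal.2 hunit (by simpa using Ideal.sub_mem _ hxt ht)

lemma exists_decompEval_eq_mul_add {n : ℕ} {b : Fin n → A} (hb : ∀ l, b l ∈ maximalIdeal A)
    (v : Fin n → E) (φ : Module.Dual K E) (i : Fin n) (hφ : ∀ l < i, φ (v l) = 0) :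
    ∃ t ∈ maximalIdeal A, decompEval b v φ =
      (∏ m ∈ Iic i, b m) * (algebraMap K A (φ (v i)) + t) := by
  classical
  set tail : Fin n → A := fun l =>
    if i < l then (∏ m ∈ Ioc i l, b m) * algebraMap K A (φ (v l)) else 0
  have hterm : ∀ l, (∏ m ∈ Iic l, b m) * algebraMap K A (φ (v l)) =
      (∏ m ∈ Iic i, b m) * ((if i = l then algebraMap K A (φ (v i)) else 0) + tail l) := by
    intro l
    rcases lt_trichotomy l i with hl | rfl | hl
    · simp [tail, hφ l hl, hl.ne', not_lt_of_gt hl]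
    · simp [tail]
    · simp [tail, hl.ne, hl, prod_Iic_eq_mul_prod_Ioc b hl.le, mul_assoc]
  refine ⟨∑ l, tail l, Ideal.sum_mem _ fun l _ => ?_, ?_⟩
  · by_cases hl : i < l
    · simp only [tail, if_pos hl]
      exact Ideal.mul_mem_right _ _ (Ideal.prod_mem _ (mem_Ioc.2 ⟨hl, le_rfl⟩) (hb l))
    · simp [tail, hl]
  · simp only [decompEval, hterm, ← mul_sum, sum_add_distrib, sum_ite_eq, mem_univ, if_true]

section TwoDecompositions

variable {h s : ℕ} {b : Fin h → A} {c : Fin s → A} {V : Fin h → E} {W : Fin s → E}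

lemma prod_dvd_prod_of_partialSpan_eq (hb : ∀ l, b l ∈ maximalIdeal A)
    (hc : ∀ l, c l ∈ maximalIdeal A)
    (heq : ∀ φ : Module.Dual K E, decompEval b V φ = decompEval c W φ)
    (hV : LinearIndependent K V) {i : ℕ} (hih : i < h) (his : i < s)
    (hF : partialSpan K V i = partialSpan K W i) :
    ∏ m ∈ Iic (⟨i, his⟩ : Fin s), c m ∣ ∏ m ∈ Iic (⟨i, hih⟩ : Fin h), b m := by
  obtain ⟨φ, hφF, hφV⟩ := exists_dual_ne_zero_of_notMem (apply_notMem_partialSpan hV hih)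
  obtain ⟨t, ht, hVeq⟩ := exists_decompEval_eq_mul_add hb V φ ⟨i, hih⟩ fun l hl =>
    hφF _ (apply_mem_partialSpan V hl)
  obtain ⟨t', -, hWeq⟩ := exists_decompEval_eq_mul_add hc W φ ⟨i, his⟩ fun l hl =>
    hφF _ (hF ▸ apply_mem_partialSpan W hl)
  rw [← (isUnit_algebraMap_add hφV ht).dvd_mul_right, ← hVeq, heq φ, hWeq]
  exact dvd_mul_right _ _

variable [IsDomain A]

lemma mem_partialSpan_sup_of_prod_dvd (hb : ∀ l, b l ∈ maximalIdeal A) (hb0 : ∀ l, b l ≠ 0)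
    (hc : ∀ l, c l ∈ maximalIdeal A)
    (heq : ∀ φ : Module.Dual K E, decompEval b V φ = decompEval c W φ)
    {i : ℕ} (hih : i < h) (his : i < s) (hF : partialSpan K V i = partialSpan K W i)
    (hdvd : ∏ m ∈ Iic (⟨i, hih⟩ : Fin h), b m ∣ ∏ m ∈ Iic (⟨i, his⟩ : Fin s), c m) :
    V ⟨i, hih⟩ ∈ partialSpan K W i ⊔ K ∙ W ⟨i, his⟩ := by
  by_contra hnot
  obtain ⟨φ, hφF, hφV⟩ := exists_dual_ne_zero_of_notMem hnot
  obtain ⟨t, ht, hVeq⟩ := exists_decompEval_eq_mul_add hb V φ ⟨i, hih⟩ fun l hl =>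
    hφF _ (Submodule.mem_sup_left (hF ▸ apply_mem_partialSpan V hl))
  obtain ⟨t', ht', hWeq⟩ := exists_decompEval_eq_mul_add hc W φ ⟨i, his⟩ fun l hl =>
    hφF _ (Submodule.mem_sup_left (apply_mem_partialSpan W hl))
  rw [hφF _ (Submodule.mem_sup_right (Submodule.mem_span_singleton_self _)), map_zero,
    zero_add] at hWeq
  obtain ⟨r, hr⟩ := hdvd
  have hcancel : algebraMap K A (φ (V ⟨i, hih⟩)) + t = r * t' :=
    mul_left_cancel₀ (prod_ne_zero_iff.2 fun l _ => hb0 l)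
      (by rw [← hVeq, heq φ, hWeq, hr, mul_assoc])
  exact notMem_maximalIdeal.2 (isUnit_algebraMap_add hφV ht)
    (hcancel ▸ Ideal.mul_mem_left _ _ ht')

lemma partialSpan_succ_eq (hb : ∀ l, b l ∈ maximalIdeal A) (hb0 : ∀ l, b l ≠ 0)
    (hc : ∀ l, c l ∈ maximalIdeal A) (hc0 : ∀ l, c l ≠ 0)
    (heq : ∀ φ : Module.Dual K E, decompEval b V φ = decompEval c W φ)
    (hV : LinearIndependent K V) (hW : LinearIndependent K W)
    {i : ℕ} (hih : i < h) (his : i < s) (hF : partialSpan K V i = partialSpan K W i) :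
    partialSpan K V (i + 1) = partialSpan K W (i + 1) := by
  have heq' : ∀ φ : Module.Dual K E, decompEval c W φ = decompEval b V φ := fun φ => (heq φ).symm
  have hcb := prod_dvd_prod_of_partialSpan_eq hb hc heq hV hih his hF
  have hbc := prod_dvd_prod_of_partialSpan_eq hc hb heq' hW his hih hF.symm
  rw [partialSpan_succ V hih, partialSpan_succ W his]
  apply le_antisymm <;> refine sup_le ?_ ((Submodule.span_singleton_le_iff_mem _ _).2 ?_)
  · exact hF.le.trans le_sup_left
  · exact mem_partialSpan_sup_of_prod_dvd hb hb0 hc heq hih his hF hbc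
  · exact hF.ge.trans le_sup_left
  · exact mem_partialSpan_sup_of_prod_dvd hc hc0 hb heq' his hih hF.symm hcb

lemma partialSpan_eq_of_le (hb : ∀ l, b l ∈ maximalIdeal A) (hb0 : ∀ l, b l ≠ 0)
    (hc : ∀ l, c l ∈ maximalIdeal A) (hc0 : ∀ l, c l ≠ 0)
    (heq : ∀ φ : Module.Dual K E, decompEval b V φ = decompEval c W φ)
    (hV : LinearIndependent K V) (hW : LinearIndependent K W) :
    ∀ i, i ≤ h → i ≤ s → partialSpan K V i = partialSpan K W i
  | 0, _, _ => by simp [partialSpan]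
  | i + 1, hih, his => partialSpan_succ_eq hb hb0 hc hc0 heq hV hW hih his
      (partialSpan_eq_of_le hb hb0 hc hc0 heq hV hW i (Nat.le_of_succ_le hih)
        (Nat.le_of_succ_le his))

lemma le_of_partialSpan_eq (hc : ∀ l, c l ∈ maximalIdeal A) (hc0 : ∀ l, c l ≠ 0)
    (heq : ∀ φ : Module.Dual K E, decompEval b V φ = decompEval c W φ)
    (hW : LinearIndependent K W) (hF : partialSpan K V h = partialSpan K W h) : s ≤ h := by
  by_contra! hlt
  obtain ⟨φ, hφF, hφW⟩ := exists_dual_ne_zero_of_notMem (apply_notMem_partialSpan hW hlt)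
  obtain ⟨t, ht, hWeq⟩ := exists_decompEval_eq_mul_add hc W φ ⟨h, hlt⟩ fun l hl =>
    hφF _ (apply_mem_partialSpan W hl)
  have hV0 : decompEval b V φ = 0 := sum_eq_zero fun l _ => by
    rw [hφF _ (hF ▸ apply_mem_partialSpan V l.2), map_zero, mul_zero]
  have hW0 : decompEval c W φ ≠ 0 := by
    rw [hWeq]
    exact mul_ne_zero (prod_ne_zero_iff.2 fun l _ => hc0 l) (isUnit_algebraMap_add hφW ht).ne_zero
  exact hW0 (by rw [← heq, hV0])

theorem eq_and_partialSpan_eq (hb : ∀ l, b l ∈ maximalIdeal A) (hb0 : ∀ l, b l ≠ 0)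
    (hc : ∀ l, c l ∈ maximalIdeal A) (hc0 : ∀ l, c l ≠ 0)
    (heq : ∀ φ : Module.Dual K E, decompEval b V φ = decompEval c W φ)
    (hV : LinearIndependent K V) (hW : LinearIndependent K W) :
    h = s ∧ ∀ i ≤ h, partialSpan K V i = partialSpan K W i := by
  have hflag := partialSpan_eq_of_le hb hb0 hc hc0 heq hV hW
  have hhs : h = s := by
    rcases le_total h s with hle | hle
    · exact le_antisymm hle (le_of_partialSpan_eq hc hc0 heq hW (hflag h le_rfl hle))
    · exact le_antisymm (le_of_partialSpan_eq hb hb0 (fun φ => (heq φ).symm) hV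
        (hflag s hle le_rfl).symm) hle
  exact ⟨hhs, fun i hi => hflag i hi (hhs ▸ hi)⟩

end TwoDecompositions

end CanonicalDecomposition

open CanonicalDecomposition

theorem canonical_decomposition_unique_general
    (K : Type) [Field K] (A : Type) [CommRing A] [IsDomain A] [ValuationRing A] [Algebra K A]
    (k h s : ℕ)
    (b : Fin h → A) (c : Fin s → A)
    (V : Fin h → (Fin k → K)) (W : Fin s → (Fin k → K))
    (hb : ∀ i, b i ∈ IsLocalRing.maximalIdeal A ∧ b i ≠ 0)
    (hc : ∀ i, c i ∈ IsLocalRing.maximalIdeal A ∧ c i ≠ 0)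
    (hV : LinearIndependent K V) (hW : LinearIndependent K W)
    (heq : ∀ j : Fin k,
      ∑ i : Fin h, (∏ l ∈ Finset.Iic i, b l) * algebraMap K A (V i j) =
      ∑ i : Fin s, (∏ l ∈ Finset.Iic i, c l) * algebraMap K A (W i j)) :
    h = s ∧
    ∀ i : ℕ, i ≤ h →
      Submodule.span K {v | ∃ l : Fin h, l.1 < i ∧ v = V l} =
      Submodule.span K {w | ∃ l : Fin s, l.1 < i ∧ w = W l} := by
  have heq' (φ : Module.Dual K (Fin k → K)) : decompEval b V φ = decompEval c W φ := by
    simp only [decompEval_eq_sum_coord, heq]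
  obtain ⟨hhs, hflag⟩ := eq_and_partialSpan_eq (fun l => (hb l).1) (fun l => (hb l).2)
    (fun l => (hc l).1) (fun l => (hc l).2) heq' hV hW
  refine ⟨hhs, fun i hi => ?_⟩
  have hset {n : ℕ} (v : Fin n → Fin k → K) :
      {x | ∃ l : Fin n, l.1 < i ∧ x = v l} = v '' {l | l.1 < i} := by
    ext; simp [eq_comm]
  rw [hset, hset]
  exact hflag i hi

/-- **Uniqueness of the canonical decomposition.**
Let `K` be a field and `A` a deformation ring over `K` (a `K`-algebra which is a valuation
domain whose residue field is `K` via the structure map) with maximal ideal `m`.  If a vector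
of `mᵏ` admits two decompositions `b₁V₁ + b₁b₂V₂ + ⋯ + b₁⋯b_hV_h = c₁W₁ + ⋯ + c₁⋯c_sW_s`
with the `bᵢ, cᵢ` nonzero elements of `m` and `(Vᵢ)`, `(Wᵢ)` linearly independent families of
`Kᵏ`, then `h = s` and the two families generate the same flag:
`span{V₁,…,Vᵢ} = span{W₁,…,Wᵢ}` for every `i`. -/
theorem canonical_decomposition_unique
    (K : Type) [Field K] (A : Type) [CommRing A] [IsDomain A] [ValuationRing A] [Algebra K A]
    (hres : Function.Bijective ((IsLocalRing.residue A).comp (algebraMap K A)))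
    (k h s : ℕ)
    (b : Fin h → A) (c : Fin s → A)
    (V : Fin h → (Fin k → K)) (W : Fin s → (Fin k → K))
    (hb : ∀ i, b i ∈ IsLocalRing.maximalIdeal A ∧ b i ≠ 0)
    (hc : ∀ i, c i ∈ IsLocalRing.maximalIdeal A ∧ c i ≠ 0)
    (hV : LinearIndependent K V) (hW : LinearIndependent K W)
    (heq : ∀ j : Fin k,
      ∑ i : Fin h, (∏ l ∈ Finset.Iic i, b l) * algebraMap K A (V i j) =
      ∑ i : Fin s, (∏ l ∈ Finset.Iic i, c l) * algebraMap K A (W i j)) :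
    h = s ∧
    ∀ i : ℕ, i ≤ h →
      Submodule.span K {v | ∃ l : Fin h, l.1 < i ∧ v = V l} =
      Submodule.span K {w | ∃ l : Fin s, l.1 < i ∧ w = W l} :=
  canonical_decomposition_unique_general K A k h s b c V W hb hc hV hW heq
end

section
/- Vanishing of H³ implies integrability of 2-cocycles: let μ₀ be a Lie bracket on ℂⁿ. Assume that every alternating trilinear map Ψ : ℂⁿ×ℂⁿ×ℂⁿ → ℂⁿ with δ³Ψ = 0 is of the form Ψ = δ²φ for some alternating bilinear map φ (i.e. H³(μ₀,μ₀) = 0). Then every alternating bilinear map φ₁ with δ²φ₁ = 0 is the infinitesimal part of a formal deformation of μ₀: there exists a sequence (φ_p)_{p≥2} of alternating bilinear maps such that, setting φ₀ = μ₀, for every p ≥ 0 one has Σ_{i+j=p, i,j≥0} φ_i ∘ φ_j = 0. -/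
/-- A bilinear alternating (antisymmetric) map `ℂⁿ × ℂⁿ → ℂⁿ` (a 2-cochain). -/
def IsAltBilinearMap (n : ℕ) (φ : (Fin n → ℂ) → (Fin n → ℂ) → (Fin n → ℂ)) : Prop :=
  (∀ X X' Y, φ (X + X') Y = φ X Y + φ X' Y) ∧
  (∀ (c : ℂ) X Y, φ (c • X) Y = c • φ X Y) ∧
  (∀ X Y Y', φ X (Y + Y') = φ X Y + φ X Y') ∧
  (∀ (c : ℂ) X Y, φ X (c • Y) = c • φ X Y) ∧
  (∀ X Y, φ X Y = - φ Y X)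

/-- An alternating trilinear map `ℂⁿ × ℂⁿ × ℂⁿ → ℂⁿ` (a 3-cochain). -/
def IsAltTrilinearMap (n : ℕ) (Ψ : (Fin n → ℂ) → (Fin n → ℂ) → (Fin n → ℂ) → (Fin n → ℂ)) :
    Prop :=
  (∀ X X' Y Z, Ψ (X + X') Y Z = Ψ X Y Z + Ψ X' Y Z) ∧
  (∀ (c : ℂ) X Y Z, Ψ (c • X) Y Z = c • Ψ X Y Z) ∧
  (∀ X Y Y' Z, Ψ X (Y + Y') Z = Ψ X Y Z + Ψ X Y' Z) ∧
  (∀ (c : ℂ) X Y Z, Ψ X (c • Y) Z = c • Ψ X Y Z) ∧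
  (∀ X Y Z Z', Ψ X Y (Z + Z') = Ψ X Y Z + Ψ X Y Z') ∧
  (∀ (c : ℂ) X Y Z, Ψ X Y (c • Z) = c • Ψ X Y Z) ∧
  (∀ X Y Z, Ψ X Y Z = - Ψ Y X Z) ∧
  (∀ X Y Z, Ψ X Y Z = - Ψ X Z Y)

/-- The Gerstenhaber circle product of two 2-cochains:
`(φ ∘ ψ)(X,Y,Z) = φ(ψ(X,Y),Z) + φ(ψ(Y,Z),X) + φ(ψ(Z,X),Y)`. -/
def circProd (n : ℕ) (φ ψ : (Fin n → ℂ) → (Fin n → ℂ) → (Fin n → ℂ))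
    (X Y Z : Fin n → ℂ) : Fin n → ℂ :=
  φ (ψ X Y) Z + φ (ψ Y Z) X + φ (ψ Z X) Y

/-- The Chevalley coboundary `δ²φ = μ₀ ∘ φ + φ ∘ μ₀` of a 2-cochain. -/
def delta2 (n : ℕ) (μ₀ φ : (Fin n → ℂ) → (Fin n → ℂ) → (Fin n → ℂ))
    (X Y Z : Fin n → ℂ) : Fin n → ℂ :=
  circProd n μ₀ φ X Y Z + circProd n φ μ₀ X Y Z

/-- The Chevalley coboundary `δ³Ψ` of a 3-cochain `Ψ` with respect to the bracket `μ₀`. -/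
def delta3 (n : ℕ) (μ₀ : (Fin n → ℂ) → (Fin n → ℂ) → (Fin n → ℂ))
    (Ψ : (Fin n → ℂ) → (Fin n → ℂ) → (Fin n → ℂ) → (Fin n → ℂ))
    (Y₁ Y₂ Y₃ Y₄ : Fin n → ℂ) : Fin n → ℂ :=
  μ₀ Y₁ (Ψ Y₂ Y₃ Y₄) - μ₀ Y₂ (Ψ Y₁ Y₃ Y₄) + μ₀ Y₃ (Ψ Y₁ Y₂ Y₄) - μ₀ Y₄ (Ψ Y₁ Y₂ Y₃)
    - Ψ (μ₀ Y₁ Y₂) Y₃ Y₄ + Ψ (μ₀ Y₁ Y₃) Y₂ Y₄ - Ψ (μ₀ Y₁ Y₄) Y₂ Y₃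
    - Ψ (μ₀ Y₂ Y₃) Y₁ Y₄ + Ψ (μ₀ Y₂ Y₄) Y₁ Y₃ - Ψ (μ₀ Y₃ Y₄) Y₁ Y₂

/-!
The φ_p are built one at a time. Writing [φ, ψ] = φ ∘ ψ + ψ ∘ φ, so that δ²φ = [μ₀, φ], the
bracket satisfies the Jacobi-type identity δ³_a [b, c] + δ³_b [c, a] + δ³_c [a, b] = 0 for
alternating bilinear a, b, c (δ³_a is δ³ with respect to a). Summed over i + j + k = p this
says Σ_{i+m=p} δ³_{φ_i} (Σ_{j+k=m} φ_j ∘ φ_k) = 0, the t^p-coefficient of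
[μ_t, [μ_t, μ_t]] = 0 for μ_t = Σ φ_i t^i. If the equations of order < p hold, every term with
i > 0 vanishes, so the order-p obstruction Σ_{i+j=p, 0<i,j} φ_i ∘ φ_j is a δ³-cocycle; by
H³ = 0 it is δ²ψ, and φ_p := -ψ solves the equation of order p.
-/

open Finset

abbrev Cochain2 (n : ℕ) := (Fin n → ℂ) → (Fin n → ℂ) → (Fin n → ℂ)
abbrev Cochain3 (n : ℕ) := (Fin n → ℂ) → (Fin n → ℂ) → (Fin n → ℂ) → (Fin n → ℂ)

theorem Finset.Nat.sum_antidiagonal_antidiagonal_rotate {M : Type*} [AddCommMonoid M]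
    (f : ℕ → ℕ → ℕ → M) (p : ℕ) :
    ∑ x ∈ antidiagonal p, ∑ y ∈ antidiagonal x.2, f x.1 y.1 y.2
      = ∑ x ∈ antidiagonal p, ∑ y ∈ antidiagonal x.2, f y.1 y.2 x.1 := by
  simp only [Finset.sum_sigma']
  apply Finset.sum_nbij' (fun ⟨⟨i, _⟩, ⟨j, k⟩⟩ ↦ ⟨(k, i + j), (i, j)⟩)
    (fun ⟨⟨i, _⟩, ⟨j, k⟩⟩ ↦ ⟨(j, k + i), (k, i)⟩) <;> aesop (add simp [add_comm, add_left_comm])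

variable {n : ℕ}

namespace IsAltBilinearMap

variable {a : Cochain2 n}

def toLinearMap₂ (ha : IsAltBilinearMap n a) :
    (Fin n → ℂ) →ₗ[ℂ] (Fin n → ℂ) →ₗ[ℂ] (Fin n → ℂ) :=
  LinearMap.mk₂ ℂ a ha.1 ha.2.1 ha.2.2.1 ha.2.2.2.1

lemma map_zero_left (ha : IsAltBilinearMap n a) (Y : Fin n → ℂ) : a 0 Y = 0 :=
  ha.toLinearMap₂.map_zero₂ Y

lemma map_neg_left (ha : IsAltBilinearMap n a) (X Y : Fin n → ℂ) : a (-X) Y = -a X Y :=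
  ha.toLinearMap₂.map_neg₂ X Y

lemma zero : IsAltBilinearMap n 0 := by
  refine ⟨?_, ?_, ?_, ?_, ?_⟩ <;> simp

lemma neg (ha : IsAltBilinearMap n a) : IsAltBilinearMap n (-a) := by
  obtain ⟨h₁, h₂, h₃, h₄, h₅⟩ := ha
  refine ⟨?_, ?_, ?_, ?_, fun X Y ↦ by simp only [Pi.neg_apply, h₅ X Y]⟩ <;> intros <;>
    simp only [Pi.neg_apply, h₁, h₂, h₃, h₄, smul_neg, neg_add]

end IsAltBilinearMap

namespace IsAltTrilinearMap

lemma zero : IsAltTrilinearMap n 0 := by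
  refine ⟨?_, ?_, ?_, ?_, ?_, ?_, ?_, ?_⟩ <;> simp

lemma add {Ψ Θ : Cochain3 n} (hΨ : IsAltTrilinearMap n Ψ) (hΘ : IsAltTrilinearMap n Θ) :
    IsAltTrilinearMap n (Ψ + Θ) := by
  obtain ⟨a₁, a₂, a₃, a₄, a₅, a₆, a₇, a₈⟩ := hΨ
  obtain ⟨b₁, b₂, b₃, b₄, b₅, b₆, b₇, b₈⟩ := hΘ
  refine ⟨?_, ?_, ?_, ?_, ?_, ?_, fun X Y Z ↦ ?_, fun X Y Z ↦ ?_⟩ <;> intros <;>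
    simp only [Pi.add_apply, a₁, a₂, a₃, a₄, a₅, a₆, b₁, b₂, b₃, b₄, b₅, b₆, smul_add,
      add_add_add_comm]
  · rw [a₇ X Y Z, b₇ X Y Z, neg_add]
  · rw [a₈ X Y Z, b₈ X Y Z, neg_add]

lemma sum {ι : Type*} (s : Finset ι) {Ψ : ι → Cochain3 n}
    (hΨ : ∀ i ∈ s, IsAltTrilinearMap n (Ψ i)) : IsAltTrilinearMap n (∑ i ∈ s, Ψ i) :=
  Finset.sum_induction _ _ (fun _ _ ↦ add) zero hΨ

end IsAltTrilinearMap

theorem isAltTrilinearMap_circProd {φ ψ : Cochain2 n} (hφ : IsAltBilinearMap n φ)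
    (hψ : IsAltBilinearMap n ψ) : IsAltTrilinearMap n (circProd n φ ψ) := by
  obtain ⟨b₁, b₂, b₃, b₄, b₅⟩ := hψ
  refine ⟨?_, ?_, ?_, ?_, ?_, ?_, fun X Y Z ↦ ?_, fun X Y Z ↦ ?_⟩ <;> intros <;>
    simp only [circProd, hφ.1, hφ.2.1, hφ.2.2.1, hφ.2.2.2.1, b₁, b₂, b₃, b₄, smul_add]
  iterate 3 abel
  all_goals
    rw [b₅ Y X, b₅ X Z, b₅ Z Y]
    simp only [hφ.map_neg_left]
    abel

lemma circProd_self_eq_zero {μ : Cochain2 n} (hμ : IsAltBilinearMap n μ)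
    (hjac : ∀ X Y Z, μ X (μ Y Z) + μ Y (μ Z X) + μ Z (μ X Y) = 0) : circProd n μ μ = 0 := by
  funext X Y Z
  rw [circProd, hμ.2.2.2.2 (μ X Y), hμ.2.2.2.2 (μ Y Z), hμ.2.2.2.2 (μ Z X)]
  show _ = (0 : Fin n → ℂ)
  linear_combination (norm := module) -hjac X Y Z

lemma delta2_neg {μ : Cochain2 n} (hμ : IsAltBilinearMap n μ) (φ : Cochain2 n) :
    delta2 n μ (-φ) = -delta2 n μ φ := by
  funext X Y Z
  simp only [delta2, circProd, Pi.neg_apply, hμ.map_neg_left]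
  abel

def delta3Hom {a : Cochain2 n} (ha : IsAltBilinearMap n a) :
    Cochain3 n →+ ((Fin n → ℂ) → Cochain3 n) :=
  AddMonoidHom.mk' (delta3 n a) fun Ψ Θ ↦ by
    funext Y₁ Y₂ Y₃ Y₄
    simp only [delta3, Pi.add_apply, ha.2.2.1]
    abel

lemma delta3Hom_apply {a : Cochain2 n} (ha : IsAltBilinearMap n a) (Ψ : Cochain3 n) :
    delta3Hom ha Ψ = delta3 n a Ψ := rfl

def circBracket (φ ψ : Cochain2 n) : Cochain3 n := circProd n φ ψ + circProd n ψ φ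

def antisymmetrize (B : (Fin n → ℂ) →ₗ[ℂ] (Fin n → ℂ) →ₗ[ℂ] (Fin n → ℂ)) : Cochain2 n :=
  fun X Y ↦ B X Y - B Y X

set_option maxHeartbeats 1000000 in
/-- For antisymmetrizations of bilinear maps the identity needs no relation between the maps:
it holds in the free nonassociative algebra, so expanding everything and `abel` prove it. -/
theorem delta3_circBracket_antisymmetrize_cyclic
    (B₁ B₂ B₃ : (Fin n → ℂ) →ₗ[ℂ] (Fin n → ℂ) →ₗ[ℂ] (Fin n → ℂ)) :
    delta3 n (antisymmetrize B₁) (circBracket (antisymmetrize B₂) (antisymmetrize B₃))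
      + delta3 n (antisymmetrize B₂) (circBracket (antisymmetrize B₃) (antisymmetrize B₁))
      + delta3 n (antisymmetrize B₃) (circBracket (antisymmetrize B₁) (antisymmetrize B₂))
      = 0 := by
  funext Y₁ Y₂ Y₃ Y₄
  simp only [delta3, circBracket, circProd, antisymmetrize, Pi.add_apply, Pi.zero_apply]
  simp only [map_add, map_sub, LinearMap.add_apply, LinearMap.sub_apply]
  abel

lemma IsAltBilinearMap.antisymmetrize_half {a : Cochain2 n} (ha : IsAltBilinearMap n a) :
    antisymmetrize ((2 : ℂ)⁻¹ • ha.toLinearMap₂) = a := by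
  funext X Y
  simp only [antisymmetrize, LinearMap.smul_apply, IsAltBilinearMap.toLinearMap₂,
    LinearMap.mk₂_apply, ha.2.2.2.2 Y X]
  module

theorem delta3_circBracket_cyclic {a b c : Cochain2 n} (ha : IsAltBilinearMap n a)
    (hb : IsAltBilinearMap n b) (hc : IsAltBilinearMap n c) :
    delta3 n a (circBracket b c) + delta3 n b (circBracket c a) + delta3 n c (circBracket a b)
      = 0 := by
  simpa only [ha.antisymmetrize_half, hb.antisymmetrize_half, hc.antisymmetrize_half] using
    delta3_circBracket_antisymmetrize_cyclic ((2 : ℂ)⁻¹ • ha.toLinearMap₂)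
      ((2 : ℂ)⁻¹ • hb.toLinearMap₂) ((2 : ℂ)⁻¹ • hc.toLinearMap₂)

def circSum (φ : ℕ → Cochain2 n) (p : ℕ) : Cochain3 n :=
  ∑ ij ∈ antidiagonal p, circProd n (φ ij.1) (φ ij.2)

lemma two_nsmul_circSum (φ : ℕ → Cochain2 n) (p : ℕ) :
    2 • circSum φ p = ∑ ij ∈ antidiagonal p, circBracket (φ ij.1) (φ ij.2) := by
  rw [two_nsmul, circSum]
  conv_lhs => arg 2; rw [← Finset.Nat.sum_antidiagonal_swap]
  rw [← sum_add_distrib]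
  rfl

theorem sum_antidiagonal_delta3_circSum {φ : ℕ → Cochain2 n}
    (hφ : ∀ q, IsAltBilinearMap n (φ q)) (p : ℕ) :
    ∑ x ∈ antidiagonal p, delta3 n (φ x.1) (circSum φ x.2) = 0 := by
  set T : ℕ → ℕ → ℕ → (Fin n → ℂ) → Cochain3 n :=
    fun i j k ↦ delta3 n (φ i) (circBracket (φ j) (φ k))
  have hT : ∑ x ∈ antidiagonal p, ∑ y ∈ antidiagonal x.2, T x.1 y.1 y.2 = 0 := by
    have h₁ := Finset.Nat.sum_antidiagonal_antidiagonal_rotate T p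
    have h₂ := Finset.Nat.sum_antidiagonal_antidiagonal_rotate (fun i j k ↦ T j k i) p
    have hcyc : ∑ x ∈ antidiagonal p, ∑ y ∈ antidiagonal x.2,
        (T x.1 y.1 y.2 + T y.1 y.2 x.1 + T y.2 x.1 y.1) = 0 :=
      sum_eq_zero fun x _ ↦ sum_eq_zero fun y _ ↦ delta3_circBracket_cyclic (hφ _) (hφ _) (hφ _)
    simp only [sum_add_distrib, ← h₂, ← h₁] at hcyc
    rw [← nsmul_eq_zero_iff_right three_ne_zero, succ_nsmul, two_nsmul, hcyc]
  refine (nsmul_eq_zero_iff_right two_ne_zero).1 ?_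
  rw [smul_sum, ← hT]
  refine sum_congr rfl fun x _ ↦ ?_
  rw [← delta3Hom_apply (hφ x.1), ← map_nsmul, two_nsmul_circSum, map_sum]
  rfl

theorem delta3_circSum_eq_zero {φ : ℕ → Cochain2 n} (hφ : ∀ q, IsAltBilinearMap n (φ q))
    {p : ℕ} (hp : 0 < p) (hlow : ∀ m < p, circSum φ m = 0) :
    delta3 n (φ 0) (circSum φ p) = 0 := by
  obtain ⟨q, rfl⟩ := Nat.exists_eq_add_one_of_ne_zero hp.ne'
  have h := sum_antidiagonal_delta3_circSum hφ (q + 1)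
  rwa [Finset.Nat.sum_antidiagonal_succ, sum_eq_zero, add_zero] at h
  intro x hx
  rw [hlow x.2 (by have := mem_antidiagonal.1 hx; omega), ← delta3Hom_apply (hφ _), map_zero]

theorem isAltTrilinearMap_circSum {φ : ℕ → Cochain2 n} (hφ : ∀ q, IsAltBilinearMap n (φ q))
    (p : ℕ) : IsAltTrilinearMap n (circSum φ p) :=
  IsAltTrilinearMap.sum _ fun _ _ ↦ isAltTrilinearMap_circProd (hφ _) (hφ _)

def truncate (φ : ℕ → Cochain2 n) (p : ℕ) : ℕ → Cochain2 n := fun q ↦ if q < p then φ q else 0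

lemma isAltBilinearMap_truncate {φ : ℕ → Cochain2 n} {p : ℕ}
    (hφ : ∀ q < p, IsAltBilinearMap n (φ q)) (q : ℕ) : IsAltBilinearMap n (truncate φ p q) := by
  unfold truncate
  split_ifs with h
  exacts [hφ q h, IsAltBilinearMap.zero]

lemma circSum_truncate_of_lt (φ : ℕ → Cochain2 n) {m p : ℕ} (hm : m < p) :
    circSum (truncate φ p) m = circSum φ m := by
  refine sum_congr rfl fun x hx ↦ ?_
  have := mem_antidiagonal.1 hx
  simp only [truncate, if_pos (show x.1 < p by omega), if_pos (show x.2 < p by omega)]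

def obstruction (φ : ℕ → Cochain2 n) (p : ℕ) : Cochain3 n := circSum (truncate φ p) p

lemma circSum_eq_obstruction_add {φ : ℕ → Cochain2 n} (h₀ : IsAltBilinearMap n (φ 0))
    {p : ℕ} (hp : 0 < p) : circSum φ p = obstruction φ p + delta2 n (φ 0) (φ p) := by
  rw [← sub_eq_iff_eq_add', obstruction, circSum, circSum, ← sum_sub_distrib,
    sum_eq_add_of_mem (0, p) (p, 0) (by simp) (by simp) (by simp [hp.ne])]
  · funext X Y Z
    simp [truncate, hp, circProd, delta2, h₀.map_zero_left]
  · rintro ⟨i, j⟩ hx hne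
    have := mem_antidiagonal.1 hx
    simp only [ne_eq, Prod.mk.injEq] at hne this
    simp only [truncate, if_pos (show i < p by omega), if_pos (show j < p by omega), sub_self]

theorem isAltTrilinearMap_obstruction {φ : ℕ → Cochain2 n} {p : ℕ}
    (hφ : ∀ q < p, IsAltBilinearMap n (φ q)) : IsAltTrilinearMap n (obstruction φ p) :=
  isAltTrilinearMap_circSum (isAltBilinearMap_truncate hφ) p

theorem delta3_obstruction_eq_zero {φ : ℕ → Cochain2 n} {p : ℕ} (hp : 0 < p)
    (hφ : ∀ q < p, IsAltBilinearMap n (φ q)) (hlow : ∀ m < p, circSum φ m = 0) :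
    delta3 n (φ 0) (obstruction φ p) = 0 := by
  have h₀ : truncate φ p 0 = φ 0 := if_pos hp
  rw [← h₀]
  exact delta3_circSum_eq_zero (isAltBilinearMap_truncate hφ) hp fun m hm ↦ by
    rw [circSum_truncate_of_lt φ hm, hlow m hm]

/-- The recursive call spells out `obstruction (deformationSeq μ₀ φ₁) (p + 2)`;
`Classical.epsilon` picks a 2-cochain whose coboundary it is, whenever there is one. -/
noncomputable def deformationSeq (μ₀ φ₁ : Cochain2 n) : ℕ → Cochain2 n
  | 0 => μ₀
  | 1 => φ₁
  | p + 2 => -Classical.epsilon fun ψ ↦ IsAltBilinearMap n ψ ∧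
      circSum (fun q ↦ if q < p + 2 then deformationSeq μ₀ φ₁ q else 0) (p + 2) = delta2 n μ₀ ψ

section Deformation

variable {μ₀ φ₁ : Cochain2 n}

lemma deformationSeq_add_two (p : ℕ) :
    deformationSeq μ₀ φ₁ (p + 2) = -Classical.epsilon fun ψ ↦ IsAltBilinearMap n ψ ∧
      obstruction (deformationSeq μ₀ φ₁) (p + 2) = delta2 n μ₀ ψ := by
  rw [deformationSeq]
  rfl

theorem deformationSeq_add_two_spec (hμ₀ : IsAltBilinearMap n μ₀)
    (hH3 : ∀ Ψ, IsAltTrilinearMap n Ψ → delta3 n μ₀ Ψ = 0 →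
      ∃ φ, IsAltBilinearMap n φ ∧ Ψ = delta2 n μ₀ φ) {p : ℕ}
    (ih : ∀ q < p + 2,
      IsAltBilinearMap n (deformationSeq μ₀ φ₁ q) ∧ circSum (deformationSeq μ₀ φ₁) q = 0) :
    IsAltBilinearMap n (deformationSeq μ₀ φ₁ (p + 2)) ∧
      circSum (deformationSeq μ₀ φ₁) (p + 2) = 0 := by
  have h₀ : deformationSeq μ₀ φ₁ 0 = μ₀ := deformationSeq.eq_1 μ₀ φ₁
  have halt := isAltTrilinearMap_obstruction fun q hq ↦ (ih q hq).1
  have hclosed := delta3_obstruction_eq_zero (by omega) (fun q hq ↦ (ih q hq).1)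
    fun m hm ↦ (ih m hm).2
  rw [h₀] at hclosed
  obtain ⟨hψ, hψ_eq⟩ := Classical.epsilon_spec (hH3 _ halt hclosed)
  rw [deformationSeq_add_two]
  refine ⟨hψ.neg, ?_⟩
  rw [circSum_eq_obstruction_add (ih 0 (by omega)).1 (by omega), hψ_eq, deformationSeq_add_two,
    h₀, delta2_neg hμ₀, add_neg_cancel]

theorem deformationSeq_spec (hμ₀ : IsAltBilinearMap n μ₀)
    (hjac : ∀ X Y Z, μ₀ X (μ₀ Y Z) + μ₀ Y (μ₀ Z X) + μ₀ Z (μ₀ X Y) = 0)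
    (hH3 : ∀ Ψ, IsAltTrilinearMap n Ψ → delta3 n μ₀ Ψ = 0 →
      ∃ φ, IsAltBilinearMap n φ ∧ Ψ = delta2 n μ₀ φ)
    (hφ₁ : IsAltBilinearMap n φ₁) (hcocycle : delta2 n μ₀ φ₁ = 0) (p : ℕ) :
    IsAltBilinearMap n (deformationSeq μ₀ φ₁ p) ∧ circSum (deformationSeq μ₀ φ₁) p = 0 := by
  induction p using Nat.strong_induction_on with
  | _ p ih =>
    match p with
    | 0 =>
      rw [circSum, Finset.Nat.antidiagonal_zero, sum_singleton, deformationSeq.eq_1]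
      exact ⟨hμ₀, circProd_self_eq_zero hμ₀ hjac⟩
    | 1 =>
      rw [circSum, Finset.Nat.sum_antidiagonal_succ, Finset.Nat.antidiagonal_zero, sum_singleton,
        deformationSeq.eq_1, deformationSeq.eq_2]
      exact ⟨hφ₁, hcocycle⟩
    | p + 2 => exact deformationSeq_add_two_spec hμ₀ hH3 ih

end Deformation

/-- **Vanishing of `H³` implies integrability of 2-cocycles.**
Let `μ₀` be a Lie bracket on `ℂⁿ` such that every alternating trilinear `δ³`-cocycle is a
`δ²`-coboundary (`H³(μ₀,μ₀) = 0`).  Then every 2-cocycle `φ₁` is the infinitesimal part of a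
formal deformation of `μ₀`: there is a sequence `(φ_p)` with `φ_0 = μ₀`, `φ_1 = φ₁`, each
`φ_p` alternating bilinear, satisfying `Σ_{i+j=p} φ_i ∘ φ_j = 0` for every `p ≥ 0`. -/
theorem integrable_of_H3_eq_zero
    (n : ℕ) (μ₀ : (Fin n → ℂ) → (Fin n → ℂ) → (Fin n → ℂ))
    (hμ₀ : IsAltBilinearMap n μ₀)
    (hμ₀jac : ∀ X Y Z, μ₀ X (μ₀ Y Z) + μ₀ Y (μ₀ Z X) + μ₀ Z (μ₀ X Y) = 0)
    (hH3 : ∀ Ψ, IsAltTrilinearMap n Ψ →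
      (∀ Y₁ Y₂ Y₃ Y₄, delta3 n μ₀ Ψ Y₁ Y₂ Y₃ Y₄ = 0) →
      ∃ φ, IsAltBilinearMap n φ ∧ ∀ X Y Z, Ψ X Y Z = delta2 n μ₀ φ X Y Z)
    (φ₁ : (Fin n → ℂ) → (Fin n → ℂ) → (Fin n → ℂ))
    (hφ₁ : IsAltBilinearMap n φ₁)
    (hcocycle : ∀ X Y Z, delta2 n μ₀ φ₁ X Y Z = 0) :
    ∃ φ : ℕ → ((Fin n → ℂ) → (Fin n → ℂ) → (Fin n → ℂ)),
      φ 0 = μ₀ ∧ φ 1 = φ₁ ∧ (∀ p, IsAltBilinearMap n (φ p)) ∧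
      ∀ p : ℕ, ∀ X Y Z,
        ∑ ij ∈ Finset.HasAntidiagonal.antidiagonal p, circProd n (φ ij.1) (φ ij.2) X Y Z = 0 := by
  have hH3' : ∀ Ψ, IsAltTrilinearMap n Ψ → delta3 n μ₀ Ψ = 0 →
      ∃ φ, IsAltBilinearMap n φ ∧ Ψ = delta2 n μ₀ φ := fun Ψ hΨ hclosed ↦ by
    obtain ⟨φ, hφ, hΨφ⟩ := hH3 Ψ hΨ fun Y₁ Y₂ Y₃ Y₄ ↦ by rw [hclosed]; rfl
    exact ⟨φ, hφ, funext₃ hΨφ⟩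
  have hspec := deformationSeq_spec hμ₀ hμ₀jac hH3' hφ₁ (funext₃ hcocycle)
  refine ⟨deformationSeq μ₀ φ₁, deformationSeq.eq_1 μ₀ φ₁, deformationSeq.eq_2 μ₀ φ₁,
    fun p ↦ (hspec p).1, fun p X Y Z ↦ ?_⟩
  simpa [circSum] using congr_fun₃ (hspec p).2 X Y Z
end

section
/- A symplectic structure on a Lie algebra induces a compatible left-symmetric (pre-Lie) product: let g be a finite-dimensional real Lie algebra equipped with an alternating bilinear form ω : g × g → ℝ that is nondegenerate and closed, i.e. ω(⁅X,Y⁆,Z) + ω(⁅Y,Z⁆,X) + ω(⁅Z,X⁆,Y) = 0 for all X,Y,Z. Then there is a unique bilinear product ⊛ on g satisfying ω(X ⊛ Y, Z) = −ω(Y, ⁅X,Z⁆) for all X,Y,Z ∈ g; this product is left-symmetric, i.e. (X⊛Y)⊛Z − X⊛(Y⊛Z) = (Y⊛X)⊛Z − Y⊛(X⊛Z), and its commutator recovers the bracket: X⊛Y − Y⊛X = ⁅X,Y⁆ for all X,Y ∈ g. -/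
/-!
Nondegeneracy identifies `L` with its dual, so `X ⊛ Y` can be defined as the vector representing
`Z ↦ -ω(Y, ⁅X, Z⁆)`, and it is unique. Closedness of `ω` is exactly the identity
`ω(X ⊛ Y - Y ⊛ X, Z) = ω(⁅X, Y⁆, Z)`. Pairing both associators with `W` then gives
`ω(Z, ⁅X, ⁅Y, W⁆⁆ - ⁅Y, ⁅X, W⁆⁆ - ⁅⁅X, Y⁆, W⁆)`, which vanishes by the Jacobi identity.
-/

section CommRing

variable {R L : Type*} [CommRing R] [LieRing L] [LieAlgebra R L]
  {ω : LinearMap.BilinForm R L} {P Q : L →ₗ[R] L →ₗ[R] L}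

theorem ext_of_separatingLeft (hω : ω.SeparatingLeft)
    (h : ∀ X Y Z : L, ω (P X Y) Z = ω (Q X Y) Z) : P = Q := by
  ext X Y
  refine sub_eq_zero.mp (hω _ fun Z => ?_)
  rw [map_sub, LinearMap.sub_apply, h, sub_self]

theorem sub_swap_eq_lie_of_closed (hω : ω.SeparatingLeft) (halt : ω.IsAlt)
    (hclosed : ∀ X Y Z : L, ω ⁅X, Y⁆ Z + ω ⁅Y, Z⁆ X + ω ⁅Z, X⁆ Y = 0)
    (hP : ∀ X Y Z : L, ω (P X Y) Z = -ω Y ⁅X, Z⁆) (X Y : L) :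
    P X Y - P Y X = ⁅X, Y⁆ := by
  refine sub_eq_zero.mp (hω _ fun Z => ?_)
  have h₁ := LinearMap.IsAlt.neg halt ⁅Y, Z⁆ X
  have h₂ := LinearMap.IsAlt.neg halt ⁅Z, X⁆ Y
  have h₃ : ω Y ⁅Z, X⁆ = -ω Y ⁅X, Z⁆ := by rw [← lie_skew Z X, map_neg]
  simp only [map_sub, LinearMap.sub_apply, hP]
  linear_combination -hclosed X Y Z - h₁ - h₂ - h₃

theorem leftSymmetric_of_sub_swap_eq_lie (hω : ω.SeparatingLeft)
    (hP : ∀ X Y Z : L, ω (P X Y) Z = -ω Y ⁅X, Z⁆)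
    (hcomm : ∀ X Y : L, P X Y - P Y X = ⁅X, Y⁆) (X Y Z : L) :
    P (P X Y) Z - P X (P Y Z) = P (P Y X) Z - P Y (P X Z) := by
  refine sub_eq_zero.mp (hω _ fun W => ?_)
  have hassoc : ω (P (P X Y) Z) W - ω (P (P Y X) Z) W = -ω Z ⁅⁅X, Y⁆, W⁆ := by
    rw [hP, hP, ← hcomm X Y, sub_lie, map_sub]
    ring
  have hjacobi : ω Z ⁅X, ⁅Y, W⁆⁆ - ω Z ⁅Y, ⁅X, W⁆⁆ = ω Z ⁅⁅X, Y⁆, W⁆ := by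
    rw [← map_sub, lie_lie]
  simp only [map_sub, LinearMap.sub_apply, hP, neg_neg] at hassoc ⊢
  linear_combination hassoc + hjacobi

end CommRing

section Field

variable {K L : Type*} [Field K] [LieRing L] [LieAlgebra K L] [FiniteDimensional K L]
  {ω : LinearMap.BilinForm K L}

noncomputable def symplecticProduct (hω : ω.Nondegenerate) : L →ₗ[K] L →ₗ[K] L :=
  LinearMap.mk₂ K (fun X Y => (ω.toDual hω).symm (-(ω Y ∘ₗ LieAlgebra.ad K L X)))
    (fun X X' Y => by rw [← map_add]; congr 1; ext; simp [add_comm])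
    (fun c X Y => by rw [← map_smul]; congr 1; ext; simp)
    (fun X Y Y' => by rw [← map_add]; congr 1; ext; simp [add_comm])
    (fun c X Y => by rw [← map_smul]; congr 1; ext; simp)

theorem symplecticProduct_apply (hω : ω.Nondegenerate) (X Y Z : L) :
    ω (symplecticProduct hω X Y) Z = -ω Y ⁅X, Z⁆ := by
  simp [symplecticProduct]

end Field

/-- **A symplectic structure on a Lie algebra induces a compatible left-symmetric product.**
Let `g` be a finite-dimensional real Lie algebra with a nondegenerate, closed, alternating
bilinear form `ω`.  Then there is a unique bilinear product `⊛` with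
`ω(X ⊛ Y, Z) = −ω(Y, ⁅X,Z⁆)`; it is left-symmetric and its commutator recovers the bracket. -/
theorem symplectic_gives_leftSymmetric_product
    (L : Type) [LieRing L] [LieAlgebra ℝ L] [FiniteDimensional ℝ L]
    (ω : L →ₗ[ℝ] L →ₗ[ℝ] ℝ)
    (halt : ∀ X : L, ω X X = 0)
    (hnondeg : ∀ X : L, (∀ Y : L, ω X Y = 0) → X = 0)
    (hclosed : ∀ X Y Z : L, ω ⁅X, Y⁆ Z + ω ⁅Y, Z⁆ X + ω ⁅Z, X⁆ Y = 0) :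
    ∃ P : L →ₗ[ℝ] L →ₗ[ℝ] L,
      (∀ X Y Z : L, ω (P X Y) Z = - ω Y ⁅X, Z⁆) ∧
      (∀ Q : L →ₗ[ℝ] L →ₗ[ℝ] L, (∀ X Y Z : L, ω (Q X Y) Z = - ω Y ⁅X, Z⁆) → Q = P) ∧
      (∀ X Y Z : L, P (P X Y) Z - P X (P Y Z) = P (P Y X) Z - P Y (P X Z)) ∧
      (∀ X Y : L, P X Y - P Y X = ⁅X, Y⁆) := by
  have hω : ω.Nondegenerate :=
    (LinearMap.IsAlt.isRefl halt).nondegenerate_iff_separatingLeft.mpr hnondeg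
  have hP := symplecticProduct_apply hω
  have hcomm := sub_swap_eq_lie_of_closed hnondeg halt hclosed hP
  refine ⟨symplecticProduct hω, hP, fun Q hQ => ?_,
    leftSymmetric_of_sub_swap_eq_lie hnondeg hP hcomm, hcomm⟩
  exact ext_of_separatingLeft hnondeg fun X Y Z => by rw [hQ, hP]
end

section
/- A Rota–Baxter operator of weight zero yields a pre-Lie product: let g be a Lie algebra over a field and R : g → g a linear map satisfying ⁅R(X), R(Y)⁆ = R(⁅R(X),Y⁆ + ⁅X,R(Y)⁆) for all X,Y ∈ g. Then the bilinear map ∇(X,Y) := ⁅R(X), Y⁆ is left-symmetric, i.e. ∇(X,∇(Y,Z)) − ∇(Y,∇(X,Z)) = ∇(∇(X,Y),Z) − ∇(∇(Y,X),Z) for all X,Y,Z ∈ g; consequently the bilinear map μ'(X,Y) := ∇(X,Y) − ∇(Y,X) is antisymmetric and satisfies the Jacobi identity, and ∇ is an affine structure on the Lie algebra (g, μ'). -/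
/-!
Expanding `⁅R X, ⁅R Y, Z⁆⁆ - ⁅R Y, ⁅R X, Z⁆⁆ = ⁅⁅R X, R Y⁆, Z⁆` by the Jacobi identity and
substituting the Rota–Baxter relation for `⁅R X, R Y⁆` gives left-symmetry of
`∇(X, Y) = ⁅R X, Y⁆` at once. The commutator of any biadditive left-symmetric product satisfies
the Jacobi identity, since the cyclic sum of its Jacobiator is the cyclic sum of the
left-symmetry defects.
-/

def IsLeftSymmetric {M : Type*} [AddCommGroup M] (N : M →+ M →+ M) : Prop :=
  ∀ x y z, N x (N y z) - N y (N x z) = N (N x y) z - N (N y x) z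

theorem IsLeftSymmetric.commutator_jacobi {M : Type*} [AddCommGroup M] {N : M →+ M →+ M}
    (h : IsLeftSymmetric N) (x y z : M) :
    (N x (N y z - N z y) - N (N y z - N z y) x) +
      (N y (N z x - N x z) - N (N z x - N x z) y) +
      (N z (N x y - N y x) - N (N x y - N y x) z) = 0 := by
  have hxyz := eq_add_of_sub_eq (h x y z)
  have hyzx := eq_add_of_sub_eq (h y z x)
  have hzxy := eq_add_of_sub_eq (h z x y)
  simp only [map_sub, AddMonoidHom.sub_apply]
  rw [hxyz, hyzx, hzxy]
  abel

section RotaBaxter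

variable {L F : Type*} [LieRing L] [FunLike F L L] [AddMonoidHomClass F L L]

def rotaBaxterProduct (R : F) : L →+ L →+ L :=
  AddMonoidHom.mk' (fun X => AddMonoidHom.mk' (fun Y => ⁅R X, Y⁆) (lie_add _))
    fun X X' => by ext Y; simp [add_lie]

@[simp]
theorem rotaBaxterProduct_apply (R : F) (X Y : L) : rotaBaxterProduct R X Y = ⁅R X, Y⁆ := rfl

theorem isLeftSymmetric_rotaBaxterProduct {R : F}
    (hRB : ∀ X Y : L, ⁅R X, R Y⁆ = R (⁅R X, Y⁆ + ⁅X, R Y⁆)) :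
    IsLeftSymmetric (rotaBaxterProduct R) := by
  intro X Y Z
  simp only [rotaBaxterProduct_apply]
  rw [← lie_lie, hRB X Y, ← lie_skew (R Y) X, map_add, map_neg, add_lie, neg_lie]
  abel

end RotaBaxter

/-- **A Rota–Baxter operator of weight zero yields a pre-Lie product.**
If `R` is a linear map on a Lie algebra `g` over a field `K` with
`⁅R X, R Y⁆ = R (⁅R X, Y⁆ + ⁅X, R Y⁆)`, then `∇(X,Y) = ⁅R X, Y⁆` is left-symmetric; hence
`μ'(X,Y) = ∇(X,Y) − ∇(Y,X)` is antisymmetric, satisfies the Jacobi identity, and `∇` is an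
affine structure on the Lie algebra `(g, μ')`. -/
theorem rotaBaxter_gives_preLie
    (K : Type) [Field K] (L : Type) [LieRing L] [LieAlgebra K L]
    (R : L →ₗ[K] L)
    (hRB : ∀ X Y : L, ⁅R X, R Y⁆ = R (⁅R X, Y⁆ + ⁅X, R Y⁆)) :
    (∀ X Y Z : L,
      ⁅R X, ⁅R Y, Z⁆⁆ - ⁅R Y, ⁅R X, Z⁆⁆ = ⁅R ⁅R X, Y⁆, Z⁆ - ⁅R ⁅R Y, X⁆, Z⁆) ∧
    (∀ X Y : L, (⁅R X, Y⁆ - ⁅R Y, X⁆) = -(⁅R Y, X⁆ - ⁅R X, Y⁆)) ∧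
    (∀ X Y Z : L,
      ((⁅R X, (⁅R Y, Z⁆ - ⁅R Z, Y⁆)⁆ - ⁅R (⁅R Y, Z⁆ - ⁅R Z, Y⁆), X⁆) +
       (⁅R Y, (⁅R Z, X⁆ - ⁅R X, Z⁆)⁆ - ⁅R (⁅R Z, X⁆ - ⁅R X, Z⁆), Y⁆) +
       (⁅R Z, (⁅R X, Y⁆ - ⁅R Y, X⁆)⁆ - ⁅R (⁅R X, Y⁆ - ⁅R Y, X⁆), Z⁆)) = 0) := by
  have hLS := isLeftSymmetric_rotaBaxterProduct hRB
  exact ⟨hLS, fun X Y => (neg_sub _ _).symm, hLS.commutator_jacobi⟩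
end

section
/- A filiform real Lie algebra of even dimension carries no complex structure: let g be a real nilpotent Lie algebra of dimension 2n with n ≥ 2 which is filiform, i.e. whose lower central series satisfies C^{2n-1}(g) = {0} and C^{2n-2}(g) ≠ {0} (nilindex 2n−1). Then there is no linear map J : g → g satisfying J² = −Id and the integrability (Nijenhuis) condition ⁅J(X),J(Y)⁆ = ⁅X,Y⁆ + J(⁅J(X),Y⁆ + ⁅X,J(Y)⁆) for all X, Y ∈ g. -/
/-!
For an integrable `J` with `J² = -1`, the product `x ∗ y = ⁅x, y⁆ - ⁅J x, J y⁆` satisfies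
`J (x ∗ y) = ⁅J x, y⁆ + ⁅x, J y⁆`, so if `u` and `J u` lie in `Cᵗ` then `x ∗ u` and `J (x ∗ u)`
lie in `Cᵗ⁺¹`. In a filiform algebra of dimension `m` the quotients `Cᵗ / Cᵗ⁺¹`, `1 ≤ t ≤ m - 2`,
are lines, and comparing coefficients on two consecutive lines (the determinant `1 + b²` never
vanishes) shows by downward induction on `t` that `Cᵗ ∩ J⁻¹ Cᵗ = 0`; the induction starts because
the line `Cᵐ⁻²` is not `J`-stable. For `t = 1` this gives `2 (m - 2) = 2 dim C¹ ≤ m`, so `m = 4`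
and `g = C¹ ⊕ J C¹`. Since moreover `⁅J x, J y⁆ = ⁅x, y⁆` (as `x ∗ y ∈ C¹ ∩ J⁻¹ C¹`), this
yields `C¹ = ⁅g, g⁆ ⊆ C²`, contradicting filiformity.
-/

open Module LieModule

namespace Submodule

variable {K V : Type*} [DivisionRing K] [AddCommGroup V] [Module K V] [FiniteDimensional K V]
  {N M : Submodule K V} {w : V}

theorem sup_span_singleton_eq_of_finrank_le (hNM : N ≤ M) (hM : finrank K M ≤ finrank K N + 1)
    (hwM : w ∈ M) (hwN : w ∉ N) : N ⊔ span K {w} = M :=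
  eq_of_le_of_finrank_le (sup_le hNM ((span_singleton_le_iff_mem w M).mpr hwM))
    (by rw [finrank_sup_span_singleton hwN]; exact hM)

theorem exists_sub_smul_mem_of_finrank_le (hNM : N ≤ M) (hM : finrank K M ≤ finrank K N + 1)
    (hwM : w ∈ M) (hwN : w ∉ N) {v : V} (hv : v ∈ M) : ∃ c : K, v - c • w ∈ N := by
  rw [← sup_span_singleton_eq_of_finrank_le hNM hM hwM hwN, mem_sup] at hv
  obtain ⟨y, hy, z, hz, rfl⟩ := hv
  obtain ⟨c, rfl⟩ := mem_span_singleton.mp hz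
  exact ⟨c, by simpa using hy⟩

end Submodule

namespace LieModule

variable {R L M : Type*} [CommRing R] [LieRing L] [LieAlgebra R L] [AddCommGroup M] [Module R M]
  [LieRingModule L M]

theorem lie_mem_lowerCentralSeries_succ (x : L) {m : M} {k : ℕ}
    (hm : m ∈ lowerCentralSeries R L M k) : ⁅x, m⁆ ∈ lowerCentralSeries R L M (k + 1) := by
  rw [lowerCentralSeries_succ]
  exact LieSubmodule.lie_mem_lie (LieSubmodule.mem_top x) hm

theorem lowerCentralSeries_eq_of_succ_eq {k l : ℕ}
    (hk : lowerCentralSeries R L M (k + 1) = lowerCentralSeries R L M k) (hkl : k ≤ l) :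
    lowerCentralSeries R L M l = lowerCentralSeries R L M k := by
  induction l, hkl using Nat.le_induction with
  | base => rfl
  | succ l _ ih => rw [lowerCentralSeries_succ, ih, ← lowerCentralSeries_succ, hk]

theorem lowerCentralSeries_succ_le_of_eq_sup_span_singleton [LieModule R L M] {k : ℕ} {e : M}
    (he : (lowerCentralSeries R L M k).toSubmodule =
      (lowerCentralSeries R L M (k + 1)).toSubmodule ⊔ Submodule.span R {e})
    (hlie : ∀ x : L, ⁅x, e⁆ ∈ lowerCentralSeries R L M (k + 2)) :
    lowerCentralSeries R L M (k + 1) ≤ lowerCentralSeries R L M (k + 2) := by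
  rw [lowerCentralSeries_succ R L M k, LieSubmodule.lie_le_iff]
  intro x _ m hm
  rw [← LieSubmodule.mem_toSubmodule, he, Submodule.mem_sup] at hm
  obtain ⟨y, hy, z, hz, rfl⟩ := hm
  obtain ⟨c, rfl⟩ := Submodule.mem_span_singleton.mp hz
  rw [lie_add, lie_smul]
  exact add_mem (lie_mem_lowerCentralSeries_succ x hy) (Submodule.smul_mem _ c (hlie x))

end LieModule

namespace LieAlgebra

section CommRing

variable {R L : Type*} [CommRing R] [LieRing L] [LieAlgebra R L]

theorem lowerCentralSeries_one_le_two_of_sup_eq_top {A : Submodule R L}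
    (hA : ∀ a ∈ A, ∀ b ∈ A, ⁅a, b⁆ ∈ lowerCentralSeries R L L 2)
    (hsup : (lowerCentralSeries R L L 1).toSubmodule ⊔ A = ⊤) :
    lowerCentralSeries R L L 1 ≤ lowerCentralSeries R L L 2 := by
  have hdec (x : L) : ∃ u ∈ lowerCentralSeries R L L 1, ∃ a ∈ A, u + a = x :=
    Submodule.mem_sup.mp (hsup ▸ Submodule.mem_top)
  rw [lowerCentralSeries_succ R L L 0, LieSubmodule.lie_le_iff]
  intro x _ y _
  obtain ⟨u, hu, a, ha, rfl⟩ := hdec x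
  obtain ⟨v, hv, b, hb, rfl⟩ := hdec y
  rw [add_lie, lie_add, lie_add, ← lie_skew u b]
  exact add_mem (add_mem (lie_mem_lowerCentralSeries_succ u hv)
      (neg_mem (lie_mem_lowerCentralSeries_succ b hu)))
    (add_mem (lie_mem_lowerCentralSeries_succ a hv) (hA a ha b hb))

structure IsComplexStructure (J : L →ₗ[R] L) : Prop where
  apply_apply : ∀ x, J (J x) = -x
  integrable : ∀ x y, ⁅J x, J y⁆ = ⁅x, y⁆ + J (⁅J x, y⁆ + ⁅x, J y⁆)

namespace IsComplexStructure

variable {J : L →ₗ[R] L}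

theorem injective (hJ : IsComplexStructure J) : Function.Injective J := fun x y h => by
  simpa [hJ.apply_apply] using congrArg J h

theorem map_lie_sub_lie (hJ : IsComplexStructure J) (x y : L) :
    J (⁅x, y⁆ - ⁅J x, J y⁆) = ⁅J x, y⁆ + ⁅x, J y⁆ := by
  rw [hJ.integrable, sub_add_cancel_left, map_neg, hJ.apply_apply, neg_neg]

end IsComplexStructure

end CommRing

theorem IsComplexStructure.eq_zero_of_apply_eq_smul {K L : Type*} [Field K] [LinearOrder K]
    [IsStrictOrderedRing K] [LieRing L] [LieAlgebra K L] {J : L →ₗ[K] L}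
    (hJ : IsComplexStructure J) {u : L} {c : K} (h : J u = c • u) : u = 0 := by
  have hsq : (c ^ 2 + 1) • u = 0 := by
    rw [add_smul, one_smul, pow_two, mul_smul, ← h, ← map_smul, ← h, hJ.apply_apply,
      neg_add_cancel]
  exact (smul_eq_zero.mp hsq).resolve_left (by positivity)

section Field

variable {K L : Type*} [Field K] [LieRing L] [LieAlgebra K L]

def IsFiliform (K L : Type*) [Field K] [LieRing L] [LieAlgebra K L] : Prop :=
  lowerCentralSeries K L L (finrank K L - 1) = ⊥ ∧ lowerCentralSeries K L L (finrank K L - 2) ≠ ⊥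

namespace IsFiliform

theorem lowerCentralSeries_succ_ne (hL : IsFiliform K L) {k : ℕ} (hk : k + 2 ≤ finrank K L) :
    lowerCentralSeries K L L (k + 1) ≠ lowerCentralSeries K L L k := fun h =>
  hL.2 <| (lowerCentralSeries_eq_of_succ_eq h (by omega)).trans
    ((lowerCentralSeries_eq_of_succ_eq h (by omega)).symm.trans hL.1)

theorem lowerCentralSeries_succ_lt (hL : IsFiliform K L) {k : ℕ} (hk : k + 2 ≤ finrank K L) :
    lowerCentralSeries K L L (k + 1) < lowerCentralSeries K L L k :=
  lt_of_le_of_ne (antitone_lowerCentralSeries K L L k.le_succ) (hL.lowerCentralSeries_succ_ne hk)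

end IsFiliform

variable [FiniteDimensional K L]

theorem finrank_lowerCentralSeries_one_add_two_le
    (h : lowerCentralSeries K L L 2 ≠ lowerCentralSeries K L L 1) :
    finrank K (lowerCentralSeries K L L 1).toSubmodule + 2 ≤ finrank K L := by
  have hC₁ : lowerCentralSeries K L L 1 ≠ ⊤ := fun h₁ =>
    h ((lowerCentralSeries_eq_of_succ_eq (k := 0) h₁ (l := 2) (by norm_num)).trans h₁.symm)
  obtain ⟨x₀, hx₀⟩ : ∃ x₀ : L, x₀ ∉ lowerCentralSeries K L L 1 := by
    by_contra! hall
    exact hC₁ (eq_top_iff.mpr fun x _ => hall x)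
  by_contra! hlt
  have hsup := Submodule.sup_span_singleton_eq_of_finrank_le le_top
    (by rw [finrank_top]; omega) Submodule.mem_top hx₀
  refine h (le_antisymm (antitone_lowerCentralSeries K L L (by norm_num))
    (lowerCentralSeries_one_le_two_of_sup_eq_top ?_ hsup))
  intro a ha b hb
  obtain ⟨s, rfl⟩ := Submodule.mem_span_singleton.mp ha
  obtain ⟨t, rfl⟩ := Submodule.mem_span_singleton.mp hb
  simp only [smul_lie, lie_smul, lie_self, smul_zero, zero_mem]

namespace IsFiliform

theorem finrank_lowerCentralSeries_add_le (hL : IsFiliform K L) {k l : ℕ} (hkl : k ≤ l)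
    (hl : l + 1 ≤ finrank K L) :
    finrank K (lowerCentralSeries K L L l).toSubmodule + (l - k) ≤
      finrank K (lowerCentralSeries K L L k).toSubmodule := by
  induction l, hkl using Nat.le_induction with
  | base => simp
  | succ l hkl ih =>
    have hlt :=
      Submodule.finrank_lt_finrank_of_lt (hL.lowerCentralSeries_succ_lt (k := l) (by omega))
    have := ih (by omega)
    omega

theorem finrank_lowerCentralSeries (hL : IsFiliform K L) {k : ℕ} (hk₁ : 1 ≤ k)
    (hk : k + 1 ≤ finrank K L) :
    finrank K (lowerCentralSeries K L L k).toSubmodule = finrank K L - 1 - k := by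
  obtain hk | hk := (show k + 2 ≤ finrank K L ∨ k + 1 = finrank K L by omega)
  · have hlast : finrank K (lowerCentralSeries K L L (finrank K L - 2)).toSubmodule ≠ 0 := by
      rw [Ne, Submodule.finrank_eq_zero, LieSubmodule.toSubmodule_eq_bot]
      exact hL.2
    have hfirst :=
      finrank_lowerCentralSeries_one_add_two_le (hL.lowerCentralSeries_succ_ne (k := 1) (by omega))
    have hfrom₁ := hL.finrank_lowerCentralSeries_add_le hk₁ (by omega)
    have hto :=
      hL.finrank_lowerCentralSeries_add_le (k := k) (l := finrank K L - 2) (by omega) (by omega)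
    omega
  · rw [show k = finrank K L - 1 by omega, hL.1, LieSubmodule.bot_toSubmodule, finrank_bot]
    omega

theorem eq_sup_span_singleton (hL : IsFiliform K L) {t : ℕ} (ht₁ : 1 ≤ t)
    (ht : t + 2 ≤ finrank K L) {e : L} (he : e ∈ lowerCentralSeries K L L t)
    (he' : e ∉ lowerCentralSeries K L L (t + 1)) :
    (lowerCentralSeries K L L t).toSubmodule =
      (lowerCentralSeries K L L (t + 1)).toSubmodule ⊔ Submodule.span K {e} :=
  (Submodule.sup_span_singleton_eq_of_finrank_le (antitone_lowerCentralSeries K L L t.le_succ)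
    (by rw [hL.finrank_lowerCentralSeries ht₁ (by omega),
      hL.finrank_lowerCentralSeries (k := t + 1) (by omega) (by omega)]; omega) he he').symm

theorem exists_sub_smul_mem (hL : IsFiliform K L) {t : ℕ} (ht₁ : 1 ≤ t)
    (ht : t + 2 ≤ finrank K L) {e : L} (he : e ∈ lowerCentralSeries K L L t)
    (he' : e ∉ lowerCentralSeries K L L (t + 1)) {v : L} (hv : v ∈ lowerCentralSeries K L L t) :
    ∃ c : K, v - c • e ∈ lowerCentralSeries K L L (t + 1) := by
  rw [← LieSubmodule.mem_toSubmodule, hL.eq_sup_span_singleton ht₁ ht he he', Submodule.mem_sup]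
    at hv
  obtain ⟨y, hy, z, hz, rfl⟩ := hv
  obtain ⟨c, rfl⟩ := Submodule.mem_span_singleton.mp hz
  exact ⟨c, by simpa using hy⟩

variable [LinearOrder K] [IsStrictOrderedRing K]

theorem mem_succ_of_forall_lie_mem (hL : IsFiliform K L) (J : L → L)
    {t : ℕ} (ht₁ : 1 ≤ t) (ht : t + 3 ≤ finrank K L) {u v : L}
    (hu : u ∈ lowerCentralSeries K L L t) (hv : v ∈ lowerCentralSeries K L L t)
    (hlie : ∀ x, ⁅x, u⁆ - ⁅J x, v⁆ ∈ lowerCentralSeries K L L (t + 2) ∧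
      ⁅J x, u⁆ + ⁅x, v⁆ ∈ lowerCentralSeries K L L (t + 2)) :
    u ∈ lowerCentralSeries K L L (t + 1) ∧ v ∈ lowerCentralSeries K L L (t + 1) := by
  obtain ⟨e, he, he'⟩ := SetLike.exists_of_lt (hL.lowerCentralSeries_succ_lt (k := t) (by omega))
  obtain ⟨x, hx⟩ : ∃ x : L, ⁅x, e⁆ ∉ lowerCentralSeries K L L (t + 2) := by
    by_contra! h
    exact hL.lowerCentralSeries_succ_ne (k := t + 1) (by omega)
      (le_antisymm (antitone_lowerCentralSeries K L L (t + 1).le_succ)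
        (lowerCentralSeries_succ_le_of_eq_sup_span_singleton
          (hL.eq_sup_span_singleton ht₁ (by omega) he he') h))
  obtain ⟨α, hα⟩ := hL.exists_sub_smul_mem ht₁ (by omega) he he' hu
  obtain ⟨β, hβ⟩ := hL.exists_sub_smul_mem ht₁ (by omega) he he' hv
  obtain ⟨b, hb⟩ := hL.exists_sub_smul_mem (t := t + 1) (by omega) (by omega)
    (lie_mem_lowerCentralSeries_succ x he) hx (lie_mem_lowerCentralSeries_succ (J x) he)
  have hbr (y w : L) (c : K) (h : w - c • e ∈ lowerCentralSeries K L L (t + 1)) :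
      ⁅y, w⁆ - c • ⁅y, e⁆ ∈ lowerCentralSeries K L L (t + 2) := by
    simpa only [lie_sub, lie_smul] using lie_mem_lowerCentralSeries_succ y h
  have hcoef (c : K) (hc : c • ⁅x, e⁆ ∈ lowerCentralSeries K L L (t + 2)) : c = 0 := by
    by_contra h0
    exact hx (((lowerCentralSeries K L L (t + 2)).toSubmodule.smul_mem_iff h0).mp hc)
  -- Modulo `Cᵗ⁺²`, the two brackets are `(α - β b) ⁅x, e⁆` and `(α b + β) ⁅x, e⁆`.
  have h₁ : α - β * b = 0 := by
    refine hcoef _ ?_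
    have : (α - β * b) • ⁅x, e⁆ = (⁅x, u⁆ - ⁅J x, v⁆) - (⁅x, u⁆ - α • ⁅x, e⁆) +
        (⁅J x, v⁆ - β • ⁅J x, e⁆) + β • (⁅J x, e⁆ - b • ⁅x, e⁆) := by module
    rw [this]
    exact add_mem (add_mem (sub_mem (hlie x).1 (hbr x u α hα)) (hbr (J x) v β hβ))
      (Submodule.smul_mem _ β hb)
  have h₂ : α * b + β = 0 := by
    refine hcoef _ ?_
    have : (α * b + β) • ⁅x, e⁆ = (⁅J x, u⁆ + ⁅x, v⁆) - (⁅J x, u⁆ - α • ⁅J x, e⁆) -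
        α • (⁅J x, e⁆ - b • ⁅x, e⁆) - (⁅x, v⁆ - β • ⁅x, e⁆) := by module
    rw [this]
    exact sub_mem (sub_mem (sub_mem (hlie x).2 (hbr (J x) u α hα)) (Submodule.smul_mem _ α hb))
      (hbr x v β hβ)
  have hβ₀ : β = 0 := by
    have : β * (1 + b ^ 2) = 0 := by linear_combination h₂ - b * h₁
    exact (mul_eq_zero.mp this).resolve_right (by positivity)
  have hα₀ : α = 0 := by linear_combination h₁ + b * hβ₀
  simpa [hα₀, hβ₀] using And.intro hα hβ

theorem eq_zero_of_mem_of_apply_mem (hL : IsFiliform K L)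
    {J : L →ₗ[K] L} (hJ : IsComplexStructure J) {t : ℕ} (ht₁ : 1 ≤ t)
    (ht : t + 2 ≤ finrank K L) {u : L} (hu : u ∈ lowerCentralSeries K L L t)
    (hJu : J u ∈ lowerCentralSeries K L L t) : u = 0 := by
  obtain ⟨d, hd⟩ : ∃ d, t + d + 2 = finrank K L := ⟨finrank K L - (t + 2), by omega⟩
  induction d generalizing t u with
  | zero =>
    by_contra hu₀
    obtain ⟨c, hc⟩ := Submodule.exists_sub_smul_mem_of_finrank_le bot_le
      (by rw [hL.finrank_lowerCentralSeries ht₁ (by omega), finrank_bot]; omega) hu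
      (by simpa using hu₀) hJu
    exact hu₀ (hJ.eq_zero_of_apply_eq_smul (sub_eq_zero.mp (by simpa using hc)))
  | succ d ih =>
    have hvanish (x : L) : ⁅x, u⁆ - ⁅J x, J u⁆ = 0 := by
      refine ih (t := t + 1) (by omega) (by omega) ?_ ?_ (by omega)
      · exact sub_mem (lie_mem_lowerCentralSeries_succ x hu)
          (lie_mem_lowerCentralSeries_succ (J x) hJu)
      · rw [hJ.map_lie_sub_lie]
        exact add_mem (lie_mem_lowerCentralSeries_succ (J x) hu)
          (lie_mem_lowerCentralSeries_succ x hJu)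
    obtain ⟨hu', hJu'⟩ := hL.mem_succ_of_forall_lie_mem J ht₁ (by omega) hu hJu fun x => by
      rw [← hJ.map_lie_sub_lie, hvanish, map_zero]
      exact ⟨zero_mem _, zero_mem _⟩
    exact ih (by omega) (by omega) hu' hJu' (by omega)

theorem lie_apply_apply (hL : IsFiliform K L) (hm : 3 ≤ finrank K L)
    {J : L →ₗ[K] L} (hJ : IsComplexStructure J) (x y : L) : ⁅J x, J y⁆ = ⁅x, y⁆ := by
  have hmem (a b : L) : ⁅a, b⁆ ∈ lowerCentralSeries K L L 1 :=
    lie_mem_lowerCentralSeries_succ a (LieSubmodule.mem_top b)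
  refine (sub_eq_zero.mp (hL.eq_zero_of_mem_of_apply_mem hJ le_rfl hm ?_ ?_)).symm
  · exact sub_mem (hmem x y) (hmem (J x) (J y))
  · rw [hJ.map_lie_sub_lie]
    exact add_mem (hmem (J x) y) (hmem x (J y))

theorem not_isComplexStructure (hL : IsFiliform K L)
    (hm : 4 ≤ finrank K L) (J : L →ₗ[K] L) : ¬ IsComplexStructure J := by
  intro hJ
  set C₁ := (lowerCentralSeries K L L 1).toSubmodule
  have hinf : C₁ ⊓ C₁.map J = ⊥ := by
    refine (Submodule.eq_bot_iff _).mpr fun u ⟨hu, ⟨v, hv, hvu⟩⟩ => ?_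
    refine hL.eq_zero_of_mem_of_apply_mem hJ le_rfl (by omega) hu ?_
    rw [← hvu, hJ.apply_apply]
    exact neg_mem hv
  have hC₁ : finrank K C₁ = finrank K L - 2 := hL.finrank_lowerCentralSeries le_rfl (by omega)
  have hJC₁ : finrank K (C₁.map J) = finrank K C₁ :=
    (Submodule.equivMapOfInjective J hJ.injective C₁).finrank_eq.symm
  have hsup_le := Submodule.finrank_le (C₁ ⊔ C₁.map J)
  have hsup := Submodule.finrank_sup_add_finrank_inf_eq C₁ (C₁.map J)
  rw [hinf, finrank_bot] at hsup
  -- `2 (m - 2) ≤ m` forces `m = 4`, so `C₁` and `J C₁` span `L`.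
  have htop : C₁ ⊔ C₁.map J = ⊤ := Submodule.eq_top_of_finrank_eq (by omega)
  refine hL.lowerCentralSeries_succ_ne (k := 1) (by omega) (le_antisymm
    (antitone_lowerCentralSeries K L L (by norm_num))
    (lowerCentralSeries_one_le_two_of_sup_eq_top ?_ htop))
  rintro _ ⟨a, -, rfl⟩ _ ⟨b, hb, rfl⟩
  rw [hL.lie_apply_apply (by omega) hJ]
  exact lie_mem_lowerCentralSeries_succ a hb

end IsFiliform

end Field

end LieAlgebra

/-- **A filiform real Lie algebra of even dimension carries no complex structure.**
Let `g` be a real nilpotent Lie algebra of dimension `2n` (`n ≥ 2`) which is filiform, i.e.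
its lower central series satisfies `C^{2n-1}(g) = 0` and `C^{2n-2}(g) ≠ 0`.  Then there is no
linear map `J : g → g` with `J² = −Id` satisfying the Nijenhuis integrability condition
`⁅J X, J Y⁆ = ⁅X,Y⁆ + J (⁅J X, Y⁆ + ⁅X, J Y⁆)`. -/
theorem filiform_even_dim_has_no_complex_structure
    (L : Type) [LieRing L] [LieAlgebra ℝ L] [FiniteDimensional ℝ L]
    (n : ℕ) (hn : 2 ≤ n)
    (hdim : Module.finrank ℝ L = 2 * n)
    (hfil₁ : LieModule.lowerCentralSeries ℝ L L (2 * n - 1) = ⊥)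
    (hfil₂ : LieModule.lowerCentralSeries ℝ L L (2 * n - 2) ≠ ⊥) :
    ¬ ∃ J : L →ₗ[ℝ] L,
        (∀ X : L, J (J X) = -X) ∧
        (∀ X Y : L, ⁅J X, J Y⁆ = ⁅X, Y⁆ + J (⁅J X, Y⁆ + ⁅X, J Y⁆)) := by
  rintro ⟨J, hJ, hint⟩
  have hL : LieAlgebra.IsFiliform ℝ L := by
    rw [LieAlgebra.IsFiliform, hdim]
    exact ⟨hfil₁, hfil₂⟩
  exact hL.not_isComplexStructure (by omega) J ⟨hJ, hint⟩
end
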